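/- arXiv:1311.0395 — 7 statements merged into one kernel-verified Lean document; each statement's English description precedes it below -/
import Mathlib

section
/- Let D be a finite subset of Z^d, let ξ: Z^d → R, and let H_{D,ξ} be the operator acting on functions f: D → R (with Dirichlet boundary condition, i.e., f extended by zero outside D) by (H_{D,ξ}f)(x) = Σ_{y: |y-x|=1} [f(y) - f(x)] + ξ(x)f(x). Let λ and ψ be an eigenvalue and corresponding eigenfunction of H_{D,ξ}. Let (Y_k) be the discrete-time simple symmetric random walk on Z^d, let τ := inf{k ≥ 0 : ξ(Y_k) ≥ λ or Y_k ∉ D}, and define M_0 := ψ(Y_0) and M_n := ψ(Y_n) · Π_{k=0}^{n-1} 2d/(2d + λ - ξ(Y_k)) for 1 ≤ n ≤ τ. Then under P^x for any x ∈ Z^d, the stopped process (M_{τ∧n})_{n≥0} is a martingale with respect to the canonical filtration of Y. -/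
/-!
Before the stopping time, the eigenvalue equation says that the average of `ψ` over the
neighbours of `Y n` is `(2d + λ - ξ(Y n)) / (2d) · ψ(Y n)`; the factor
`2d / (2d + λ - ξ(Y n))` collected in the step from `n` to `n + 1` cancels exactly this, so
`E[M_{n+1} | F_n] = M_n` on `{n < τ}`, while on `{τ ≤ n}` the process is frozen. Every quantity
involved is a function of `Y_0, …, Y_n`, hence `F_n`-measurable, and bounded, since each factor
lies in `(0, 1]` before `τ` and `ψ` is supported in the finite set `D`.
-/

open scoped BigOperators
open MeasureTheory

namespace RSO

abbrev Site (d : ℕ) := Fin d → ℤ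

/-- ℓ¹ distance on ℤ^d. -/
def dist1 {d : ℕ} (x y : Site d) : ℕ := ∑ i, (x i - y i).natAbs

lemma dist1_comm {d : ℕ} (x y : Site d) : dist1 x y = dist1 y x :=
  Finset.sum_congr rfl fun i _ => by omega

/-- The Dirichlet Hamiltonian `Δ + ξ` on `D` as a matrix (Dirichlet b.c. outside `D`). -/
noncomputable def matH {d : ℕ} (D : Finset (Site d)) (ξ : Site d → ℝ) :
    Matrix D D ℝ := fun x y =>
  (if dist1 (x : Site d) (y : Site d) = 1 then (1 : ℝ) else 0) +
    (if x = y then ξ (x : Site d) - 2 * d else 0)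

lemma matH_isHermitian {d : ℕ} (D : Finset (Site d)) (ξ : Site d → ℝ) :
    (matH D ξ).IsHermitian := by
  ext x y
  simp only [matH, Matrix.conjTranspose_apply, star_add, star_one, star_zero]
  rw [dist1_comm]
  by_cases h : x = y <;> simp [h, eq_comm, star_trivial]

/-- `lambdaK D ξ k` is the `k`-th largest (1-indexed) eigenvalue of the Dirichlet
Hamiltonian `Δ + ξ` on `D` (junk value `0` if `k` is out of range). -/
noncomputable def lambdaK {d : ℕ} (D : Finset (Site d)) (ξ : Site d → ℝ) (k : ℕ) : ℝ :=
  (List.insertionSort (fun a b : ℝ => b ≤ a)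
      ((D.attach.val.map (matH_isHermitian D ξ).eigenvalues).toList)).getD (k - 1) 0

/-- The Dirichlet Hamiltonian applied to a function (with Dirichlet b.c.). -/
noncomputable def hamApply {d : ℕ} (D : Finset (Site d)) (ξ : Site d → ℝ)
    (f : Site d → ℝ) (x : Site d) : ℝ :=
  (∑ y ∈ D.filter (fun y => dist1 x y = 1), f y) + (ξ x - 2 * d) * f x

/-- `ψ` is an eigenfunction of `H_{D,ξ}` with eigenvalue `lam`. -/
def IsEigen {d : ℕ} (D : Finset (Site d)) (ξ : Site d → ℝ) (lam : ℝ)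
    (ψ : Site d → ℝ) : Prop :=
  (∀ x ∉ D, ψ x = 0) ∧ ψ ≠ 0 ∧ ∀ x ∈ D, hamApply D ξ ψ x = lam * ψ x

/-- The 2d nearest neighbours of a point of ℤ^d. -/
def nbhd {d : ℕ} (x : Site d) : Finset (Site d) :=
  Finset.univ.image fun p : Fin d × Bool =>
    Function.update x p.1 (x p.1 + if p.2 then 1 else -1)

lemma dist1_eq_one_iff {d : ℕ} {x y : Site d} :
    dist1 x y = 1 ↔ ∃ i, (x i - y i).natAbs = 1 ∧ ∀ j ≠ i, x j = y j := by
  constructor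
  · intro h
    rw [dist1] at h
    obtain ⟨i, -, hi⟩ : ∃ i ∈ Finset.univ, (x i - y i).natAbs ≠ 0 :=
      Finset.exists_ne_zero_of_sum_ne_zero (by omega)
    have hsplit :=
      Finset.add_sum_erase Finset.univ (fun j => (x j - y j).natAbs) (Finset.mem_univ i)
    rw [h] at hsplit
    have hrest : ∑ j ∈ Finset.univ.erase i, (x j - y j).natAbs = 0 := by omega
    refine ⟨i, by omega, fun j hj => ?_⟩
    have := Finset.sum_eq_zero_iff.1 hrest j (Finset.mem_erase.2 ⟨hj, Finset.mem_univ j⟩)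
    omega
  · rintro ⟨i, hi, hrest⟩
    rw [dist1, Finset.sum_eq_single i (fun j _ hj => by simp [hrest j hj]) (by simp), hi]

lemma mem_nbhd_iff {d : ℕ} {x y : Site d} : y ∈ nbhd x ↔ dist1 x y = 1 := by
  simp only [nbhd, Finset.mem_image, Finset.mem_univ, true_and, Prod.exists, Bool.exists_bool,
    Function.update_eq_iff, ← or_and_right, dist1_eq_one_iff]
  refine exists_congr fun i => and_congr_left' ?_
  simp only [Bool.false_eq_true, if_false, if_true]
  omega

lemma IsEigen.sum_nbhd {d : ℕ} {D : Finset (Site d)} {ξ : Site d → ℝ} {lam : ℝ}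
    {ψ : Site d → ℝ} (hψ : IsEigen D ξ lam ψ) {x : Site d} (hx : x ∈ D) :
    ∑ y ∈ nbhd x, ψ y = (2 * d + lam - ξ x) * ψ x := by
  have hD : ∑ y ∈ nbhd x, ψ y = ∑ y ∈ D.filter (fun y => dist1 x y = 1), ψ y := by
    rw [← Finset.sum_filter_of_ne (p := (· ∈ D))
      fun y _ hy => by_contra fun hyD => hy (hψ.1 y hyD)]
    congr 1
    ext y
    simp only [Finset.mem_filter, mem_nbhd_iff, and_comm]
  have heigen := hψ.2.2 x hx
  rw [hamApply] at heigen
  rw [hD]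
  linear_combination heigen

lemma abs_le_sum_abs_of_forall_notMem_eq_zero {α : Type*} {D : Finset α} {ψ : α → ℝ}
    (hψ : ∀ x ∉ D, ψ x = 0) (z : α) : |ψ z| ≤ ∑ y ∈ D, |ψ y| := by
  by_cases hz : z ∈ D
  · exact Finset.single_le_sum (fun y _ => abs_nonneg (ψ y)) hz
  · rw [hψ z hz, abs_zero]
    exact Finset.sum_nonneg fun y _ => abs_nonneg (ψ y)

lemma sInf_setOf_eq_or_eq_iff {P : ℕ → Prop} {n m : ℕ} :
    sInf {k | k = n ∨ P k} = m ↔ m ≤ n ∧ (∀ k < m, ¬P k) ∧ (m = n ∨ P m) := by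
  constructor
  · rintro rfl
    exact ⟨Nat.sInf_le (Or.inl rfl), fun k hk hP => Nat.notMem_of_lt_sInf hk (Or.inr hP),
      Nat.sInf_mem (s := {k | k = n ∨ P k}) ⟨n, Or.inl rfl⟩⟩
  · rintro ⟨hle, hlt, hm⟩
    refine IsLeast.csInf_eq ⟨hm, fun k hk => le_of_not_gt fun hkm => ?_⟩
    rcases hk with rfl | hP
    · omega
    · exact hlt k hkm hP

section Path

variable {d : ℕ} (D : Finset (Site d)) (ξ : Site d → ℝ) (lam : ℝ)

def Exits (z : Site d) : Prop := lam ≤ ξ z ∨ z ∉ D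

/-- `τ ∧ n` along the path `w`. -/
noncomputable def stopTime (n : ℕ) (w : ℕ → Site d) : ℕ :=
  sInf {k | k = n ∨ Exits D ξ lam (w k)}

def Survives (n : ℕ) (w : ℕ → Site d) : Prop := ∀ k ≤ n, ¬Exits D ξ lam (w k)

noncomputable def weight (m : ℕ) (w : ℕ → Site d) : ℝ :=
  ∏ j ∈ Finset.range m, 2 * d / (2 * d + lam - ξ (w j))

/-- `M_{τ∧n}` along the path `w`. -/
noncomputable def stoppedWeightedValue (ψ : Site d → ℝ) (n : ℕ) (w : ℕ → Site d) : ℝ :=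
  ψ (w (stopTime D ξ lam n w)) * weight ξ lam (stopTime D ξ lam n w) w

open Classical in
noncomputable def runningWeight (n : ℕ) (w : ℕ → Site d) : ℝ :=
  if Survives D ξ lam n w then weight ξ lam (n + 1) w else 0

open Classical in
noncomputable def frozenValue (ψ : Site d → ℝ) (n : ℕ) (w : ℕ → Site d) : ℝ :=
  if Survives D ξ lam n w then 0 else stoppedWeightedValue D ξ lam ψ n w

variable {D ξ lam} {ψ : Site d → ℝ} {n m : ℕ} {w : ℕ → Site d}

lemma not_exits_iff {z : Site d} : ¬Exits D ξ lam z ↔ ξ z < lam ∧ z ∈ D := by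
  simp only [Exits, not_or, not_le, not_not]

lemma stopTime_eq_iff :
    stopTime D ξ lam n w = m ↔
      m ≤ n ∧ (∀ k < m, ¬Exits D ξ lam (w k)) ∧ (m = n ∨ Exits D ξ lam (w m)) :=
  sInf_setOf_eq_or_eq_iff

lemma stopTime_le : stopTime D ξ lam n w ≤ n := (stopTime_eq_iff.1 rfl).1

lemma not_exits_of_lt_stopTime {k : ℕ} (hk : k < stopTime D ξ lam n w) :
    ¬Exits D ξ lam (w k) :=
  (stopTime_eq_iff.1 rfl).2.1 k hk

lemma stopTime_eq_self (h : ∀ k < n, ¬Exits D ξ lam (w k)) : stopTime D ξ lam n w = n :=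
  stopTime_eq_iff.2 ⟨le_rfl, h, Or.inl rfl⟩

open Classical in
lemma stopTime_succ :
    stopTime D ξ lam (n + 1) w =
      if Survives D ξ lam n w then n + 1 else stopTime D ξ lam n w := by
  split_ifs with h
  · exact stopTime_eq_self fun k hk => h k (Nat.lt_succ_iff.1 hk)
  obtain ⟨hle, hlt, hexit⟩ := stopTime_eq_iff.1 (rfl : stopTime D ξ lam n w = _)
  refine stopTime_eq_iff.2 ⟨hle.trans n.le_succ, hlt, Or.inr ?_⟩
  rcases hexit with hn | hexit
  · obtain ⟨k, hk, hk_exit⟩ : ∃ k ≤ n, Exits D ξ lam (w k) := by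
      simpa only [Survives, not_forall, not_not, exists_prop] using h
    obtain hk | rfl := hk.lt_or_eq
    · exact absurd hk_exit (hlt k (by omega))
    · rwa [hn]
  · exact hexit

lemma dependsOn_stopTime (n : ℕ) : DependsOn (stopTime D ξ lam n) (Set.Iic n) := by
  intro w w' h
  obtain ⟨hle, hlt, hexit⟩ := stopTime_eq_iff.1 (rfl : stopTime D ξ lam n w = _)
  refine (stopTime_eq_iff.2 ⟨hle, fun k hk => ?_, hexit.imp id fun he => ?_⟩).symm
  · rw [← h k (hk.trans_le hle).le]
    exact hlt k hk
  · rwa [← h _ hle]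

lemma dependsOn_survives (n : ℕ) : DependsOn (Survives D ξ lam n) (Set.Iic n) :=
  fun _ _ h => propext <| forall₂_congr fun k hk => by rw [h k hk]

lemma dependsOn_weight (m : ℕ) : DependsOn (weight ξ lam m) (Set.Iio m) :=
  fun _ _ h => Finset.prod_congr rfl fun j hj => by rw [h j (Finset.mem_range.1 hj)]

lemma dependsOn_stoppedWeightedValue (ψ : Site d → ℝ) (n : ℕ) :
    DependsOn (stoppedWeightedValue D ξ lam ψ n) (Set.Iic n) := by
  intro w w' h
  rw [stoppedWeightedValue, stoppedWeightedValue, ← dependsOn_stopTime n h, h _ stopTime_le,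
    dependsOn_weight _ fun j hj => h j ((Set.mem_Iio.1 hj).le.trans stopTime_le)]

lemma dependsOn_runningWeight (n : ℕ) : DependsOn (runningWeight D ξ lam n) (Set.Iic n) := by
  intro w w' h
  rw [runningWeight, runningWeight, dependsOn_survives n h,
    dependsOn_weight (n + 1) fun j hj => h j (Nat.lt_succ_iff.1 hj)]

lemma dependsOn_frozenValue (ψ : Site d → ℝ) (n : ℕ) :
    DependsOn (frozenValue D ξ lam ψ n) (Set.Iic n) := by
  intro w w' h
  rw [frozenValue, frozenValue, dependsOn_survives n h, dependsOn_stoppedWeightedValue ψ n h]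

lemma abs_weight_le_one (h : ∀ j < m, ξ (w j) < lam) : |weight ξ lam m w| ≤ 1 := by
  rw [weight, Finset.abs_prod]
  refine Finset.prod_le_one (fun _ _ => abs_nonneg _) fun j hj => ?_
  have hj := h j (Finset.mem_range.1 hj)
  have hc : 0 < 2 * (d : ℝ) + lam - ξ (w j) := by linarith [d.cast_nonneg (α := ℝ)]
  rw [abs_of_nonneg (by positivity), div_le_one hc]
  linarith

lemma abs_stoppedWeightedValue_le {B : ℝ} (hψ : ∀ z, |ψ z| ≤ B) :
    |stoppedWeightedValue D ξ lam ψ n w| ≤ B := by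
  rw [stoppedWeightedValue, abs_mul]
  refine (mul_le_of_le_one_right (abs_nonneg _) ?_).trans (hψ _)
  exact abs_weight_le_one fun j hj => (not_exits_iff.1 (not_exits_of_lt_stopTime hj)).1

lemma abs_runningWeight_le_one : |runningWeight D ξ lam n w| ≤ 1 := by
  rw [runningWeight]
  split_ifs with h
  · exact abs_weight_le_one fun j hj => (not_exits_iff.1 (h j (Nat.lt_succ_iff.1 hj))).1
  · simp

lemma stoppedWeightedValue_succ :
    stoppedWeightedValue D ξ lam ψ (n + 1) w =
      runningWeight D ξ lam n w * ψ (w (n + 1)) + frozenValue D ξ lam ψ n w := by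
  rw [stoppedWeightedValue, stopTime_succ, runningWeight, frozenValue]
  split_ifs
  · rw [mul_comm, add_zero]
  · rw [zero_mul, zero_add, stoppedWeightedValue]

lemma runningWeight_mul_add_frozenValue (hd : 0 < d) (hψ : IsEigen D ξ lam ψ) :
    runningWeight D ξ lam n w * ((∑ y ∈ nbhd (w n), ψ y) / (2 * d)) +
      frozenValue D ξ lam ψ n w = stoppedWeightedValue D ξ lam ψ n w := by
  rw [runningWeight, frozenValue]
  split_ifs with h
  · obtain ⟨hlt, hmem⟩ := not_exits_iff.1 (h n le_rfl)
    have hc : 2 * (d : ℝ) + lam - ξ (w n) ≠ 0 := by linarith [d.cast_nonneg (α := ℝ)]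
    have hd' : 2 * (d : ℝ) ≠ 0 := by positivity
    rw [add_zero, hψ.sum_nbhd hmem, stoppedWeightedValue,
      stopTime_eq_self fun k hk => h k hk.le, weight, weight, Finset.prod_range_succ]
    field_simp
  · rw [zero_mul, zero_add]

end Path

lemma measurable_comp_of_dependsOn_Iic {Ω α β : Type*} {m : MeasurableSpace Ω}
    [MeasurableSpace α] [Countable α] [MeasurableSingletonClass α] [MeasurableSpace β]
    {Y : ℕ → Ω → α} {n : ℕ} (hY : ∀ k ≤ n, Measurable (Y k)) {F : (ℕ → α) → β}
    (hF : DependsOn F (Set.Iic n)) : Measurable fun ω => F fun k => Y k ω := by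
  have hfactor : (fun ω => F fun k => Y k ω) =
      (fun v : Fin (n + 1) → α => F fun k => v ⟨min k n, by omega⟩) ∘
        fun ω i => Y i ω :=
    funext fun ω => hF fun k (hk : k ≤ n) => by simp [min_eq_left hk]
  rw [hfactor]
  exact (measurable_of_countable _).comp
    (measurable_pi_lambda _ fun i => hY i (Nat.lt_succ_iff.1 i.2))

lemma martingale_of_succ_eq_mul_add {Ω : Type*} {m0 : MeasurableSpace Ω} {μ : Measure Ω}
    [IsFiniteMeasure μ] {ℱ : Filtration ℕ m0} {f a b h : ℕ → Ω → ℝ} {C : ℝ}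
    (hf : StronglyAdapted ℱ f) (hf_int : ∀ n, Integrable (f n) μ)
    (ha : StronglyAdapted ℱ a) (ha_bdd : ∀ n ω, |a n ω| ≤ C) (hb : StronglyAdapted ℱ b)
    (hh : ∀ n, Integrable (h n) μ) (hsucc : ∀ n, f (n + 1) = a n * h n + b n)
    (hstep : ∀ n, a n * μ[h n | ℱ n] + b n =ᵐ[μ] f n) : Martingale f ℱ μ := by
  refine martingale_nat hf hf_int fun n => ?_
  have hah : Integrable (a n * h n) μ :=
    (hh n).bdd_mul ((ha n).mono (ℱ.le n)).aestronglyMeasurable (ae_of_all _ (ha_bdd n))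
  have hb_int : Integrable (b n) μ := by
    simpa [hsucc n] using (hf_int (n + 1)).sub hah
  calc f n =ᵐ[μ] a n * μ[h n | ℱ n] + b n := (hstep n).symm
    _ =ᵐ[μ] μ[a n * h n | ℱ n] + μ[b n | ℱ n] := by
      rw [condExp_of_stronglyMeasurable (ℱ.le n) (hb n) hb_int]
      exact (condExp_mul_of_stronglyMeasurable_left (ha n) hah (hh n)).symm.add .rfl
    _ =ᵐ[μ] μ[f (n + 1) | ℱ n] := by
      rw [hsucc n]
      exact (condExp_add hah hb_int _).symm

theorem stopped_process_martingale_general {d : ℕ} (hd : 0 < d)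
    {Ω : Type*} [m0 : MeasurableSpace Ω] (μ : MeasureTheory.Measure Ω)
    [MeasureTheory.IsProbabilityMeasure μ]
    (ℱ : MeasureTheory.Filtration ℕ m0)
    (Y : ℕ → Ω → Site d)
    (hnat : ∀ n, (ℱ n : MeasurableSpace Ω) =
      ⨆ k ∈ Set.Iic n, MeasurableSpace.comap (Y k) ⊤)
    (hMarkov : ∀ (n : ℕ) (g : Site d → ℝ),
      μ[fun ω => g (Y (n + 1) ω)|ℱ n] =ᵐ[μ]
        fun ω => (∑ y ∈ nbhd (Y n ω), g y) / (2 * d))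
    (D : Finset (Site d)) (ξ : Site d → ℝ) (lam : ℝ) (ψ : Site d → ℝ)
    (hψ : IsEigen D ξ lam ψ) :
    MeasureTheory.Martingale
      (fun (n : ℕ) (ω : Ω) =>
        let m := sInf {k : ℕ | k = n ∨ lam ≤ ξ (Y k ω) ∨ Y k ω ∉ D}
        ψ (Y m ω) * ∏ j ∈ Finset.range m, (2 * d) / (2 * d + lam - ξ (Y j ω)))
      ℱ μ := by
  have hY : ∀ n k, k ≤ n → Measurable[ℱ n] (Y k) := fun n k hk =>
    (measurable_iff_comap_le.2 <| (hnat n).symm ▸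
      le_biSup (fun k => MeasurableSpace.comap (Y k) ⊤) hk).mono le_rfl le_top
  have adapted {F : ℕ → (ℕ → Site d) → ℝ} (hF : ∀ n, DependsOn (F n) (Set.Iic n)) :
      StronglyAdapted ℱ fun n ω => F n fun k => Y k ω :=
    fun n => (measurable_comp_of_dependsOn_Iic (hY n) (hF n)).stronglyMeasurable
  have integrable {g : Ω → ℝ} {C : ℝ} (hg : StronglyMeasurable g)
      (hC : ∀ ω, |g ω| ≤ C) : Integrable g μ :=
    .of_bound hg.aestronglyMeasurable C (ae_of_all _ hC)
  have hψ_bdd := abs_le_sum_abs_of_forall_notMem_eq_zero hψ.1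
  have hM : StronglyAdapted ℱ fun n ω => stoppedWeightedValue D ξ lam ψ n fun k => Y k ω :=
    adapted (dependsOn_stoppedWeightedValue ψ)
  have hM_int (n : ℕ) :
      Integrable (fun ω => stoppedWeightedValue D ξ lam ψ n fun k => Y k ω) μ :=
    integrable ((hM n).mono (ℱ.le n)) fun _ => abs_stoppedWeightedValue_le hψ_bdd
  have hψY_int (n : ℕ) : Integrable (fun ω => ψ (Y (n + 1) ω)) μ :=
    integrable ((measurable_of_countable ψ).comp
      ((hY _ _ le_rfl).mono (ℱ.le _) le_rfl)).stronglyMeasurable fun _ => hψ_bdd _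
  show Martingale (fun n ω => stoppedWeightedValue D ξ lam ψ n fun k => Y k ω) ℱ μ
  refine martingale_of_succ_eq_mul_add hM hM_int (adapted dependsOn_runningWeight)
    (fun _ _ => abs_runningWeight_le_one) (adapted (dependsOn_frozenValue ψ)) hψY_int
    (fun _ => funext fun _ => stoppedWeightedValue_succ) fun n => ?_
  filter_upwards [hMarkov n ψ] with ω hω
  simp only [Pi.add_apply, Pi.mul_apply, hω]
  exact runningWeight_mul_add_frozenValue hd hψ

/-- Lemma 4.1: for an eigenvalue/eigenfunction pair `(λ, ψ)` of
`H_{D,ξ}` and a simple symmetric random walk `Y` started at `x`, the stopped process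
`M_{τ∧n} = ψ(Y_{τ∧n}) Π_{j<τ∧n} 2d/(2d+λ-ξ(Y_j))` (with
`τ = inf{k : ξ(Y_k) ≥ λ or Y_k ∉ D}`) is a martingale for the canonical filtration. -/
theorem stopped_process_martingale {d : ℕ} (hd : 0 < d)
    {Ω : Type*} [m0 : MeasurableSpace Ω] (μ : MeasureTheory.Measure Ω)
    [MeasureTheory.IsProbabilityMeasure μ]
    (ℱ : MeasureTheory.Filtration ℕ m0)
    (Y : ℕ → Ω → Site d) (x : Site d)
    (hY0 : ∀ᵐ ω ∂μ, Y 0 ω = x)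
    (hnat : ∀ n, (ℱ n : MeasurableSpace Ω) =
      ⨆ k ∈ Set.Iic n, MeasurableSpace.comap (Y k) ⊤)
    (hMarkov : ∀ (n : ℕ) (g : Site d → ℝ),
      μ[fun ω => g (Y (n + 1) ω)|ℱ n] =ᵐ[μ]
        fun ω => (∑ y ∈ nbhd (Y n ω), g y) / (2 * d))
    (D : Finset (Site d)) (ξ : Site d → ℝ) (lam : ℝ) (ψ : Site d → ℝ)
    (hψ : IsEigen D ξ lam ψ) :
    MeasureTheory.Martingale
      (fun (n : ℕ) (ω : Ω) =>
        let m := sInf {k : ℕ | k = n ∨ lam ≤ ξ (Y k ω) ∨ Y k ω ∉ D}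
        ψ (Y m ω) * ∏ j ∈ Finset.range m, (2 * d) / (2 * d + lam - ξ (Y j ω)))
      ℱ μ :=
  stopped_process_martingale_general hd (m0 := m0) μ ℱ Y hnat hMarkov D ξ lam ψ hψ

end RSO
end

section
/- Let D ⊂ Z^d be finite, let ξ: D → R, and let λ, ψ be an eigenvalue and corresponding eigenfunction of the Dirichlet operator H_{D,ξ} = Δ + ξ on D. Let A' ≥ A > 0 and R ∈ N, and suppose D' ⊆ D satisfies: (i) ξ(x) ≤ λ - A' for all x ∈ D', and (ii) whenever x ∈ D and ξ(x) ≥ λ - A, then dist(x, D') ≥ R (in ℓ^1 distance). Then Σ_{x∈D'} |ψ(x)|² ≤ (1 + A/(2d))^{2-2R} (1 + A'/(2d))^{-2} ‖ψ‖₂². -/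
open scoped BigOperators
open MeasureTheory

namespace RSO

/-! At a site `x` with `ξ x ≤ lam - B` the eigenvalue equation reads
`(lam - ξ x + 2d) ψ x = ∑_{y ~ x} ψ y`, so by Cauchy–Schwarz and since every site has at most
`2d` neighbours, the mass of `ψ` on a set `S` where `ξ ≤ lam - B` is at most
`(1 + B/(2d))⁻²` times its mass on the neighbours of `S` in `D`. Applying this once to `D'` with
`B = A'`, and then `R - 1` times with `B = A` to the `r`-neighbourhoods of `D'` for `1 ≤ r < R`
(where `ξ < lam - A` by the distance hypothesis), gives the bound. -/

open Finset

section

variable {d : ℕ}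

def neighbor (x : Site d) (p : Fin d × Bool) : Site d :=
  Function.update x p.1 (x p.1 + if p.2 then 1 else -1)

lemma dist1_self (x : Site d) : dist1 x x = 0 := by
  simp [dist1]

lemma dist1_triangle (x y z : Site d) : dist1 x z ≤ dist1 x y + dist1 y z := by
  unfold dist1
  rw [← sum_add_distrib]
  exact sum_le_sum fun i _ => by omega

lemma exists_neighbor_eq_of_dist1_eq_one {x y : Site d} (h : dist1 x y = 1) :
    ∃ p, neighbor x p = y := by
  obtain ⟨i, -, hi⟩ := exists_ne_zero_of_sum_ne_zero (h.trans_ne one_ne_zero)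
  have hsplit := add_sum_erase _ (fun j => (x j - y j).natAbs) (mem_univ i)
  unfold dist1 at h
  have hi1 : (x i - y i).natAbs = 1 := by omega
  have hrest : ∀ j ≠ i, x j = y j := fun j hj => by
    have hzero : ∑ j ∈ univ.erase i, (x j - y j).natAbs = 0 := by omega
    have := sum_eq_zero_iff.mp hzero j (mem_erase.mpr ⟨hj, mem_univ j⟩)
    omega
  refine ⟨(i, decide (x i < y i)), funext fun j => ?_⟩
  rcases eq_or_ne j i with rfl | hj
  · by_cases hlt : x j < y j <;> simp [neighbor, hlt] <;> omega
  · simp [neighbor, Function.update_of_ne hj, hrest j hj]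

lemma card_filter_dist1_eq_one_le (s : Finset (Site d)) (x : Site d) :
    #(s.filter fun y => dist1 x y = 1) ≤ 2 * d := by
  classical
  calc #(s.filter fun y => dist1 x y = 1)
      ≤ #(univ.image (neighbor x)) := card_le_card fun y hy => by
        obtain ⟨p, hp⟩ := exists_neighbor_eq_of_dist1_eq_one (mem_filter.mp hy).2
        exact mem_image.mpr ⟨p, mem_univ p, hp⟩
    _ ≤ Fintype.card (Fin d × Bool) := card_image_le
    _ = 2 * d := by simp [mul_comm]

lemma mul_sq_le_sum_sq_neighbors {D : Finset (Site d)} {ξ : Site d → ℝ} {lam : ℝ}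
    {ψ : Site d → ℝ} {x : Site d} (hx : hamApply D ξ ψ x = lam * ψ x) {B : ℝ}
    (hB : 0 ≤ 2 * d + B) (hξ : ξ x ≤ lam - B) :
    (2 * d + B) ^ 2 * ψ x ^ 2 ≤ 2 * d * ∑ y ∈ D.filter (fun y => dist1 x y = 1), ψ y ^ 2 := by
  set N := D.filter fun y => dist1 x y = 1
  have hsum : ∑ y ∈ N, ψ y = (lam - ξ x + 2 * d) * ψ x := by unfold hamApply at hx; linarith
  have hcard : (#N : ℝ) ≤ 2 * d := by exact_mod_cast card_filter_dist1_eq_one_le D x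
  calc (2 * d + B) ^ 2 * ψ x ^ 2
      ≤ (lam - ξ x + 2 * d) ^ 2 * ψ x ^ 2 :=
        mul_le_mul_of_nonneg_right (pow_le_pow_left₀ hB (by linarith) 2) (sq_nonneg _)
    _ = (∑ y ∈ N, ψ y) ^ 2 := by rw [hsum, mul_pow]
    _ ≤ #N * ∑ y ∈ N, ψ y ^ 2 := sq_sum_le_card_mul_sum_sq
    _ ≤ 2 * d * ∑ y ∈ N, ψ y ^ 2 := by gcongr

lemma sum_sum_neighbors_le (S T : Finset (Site d)) {g : Site d → ℝ}
    (hg : ∀ y, 0 ≤ g y) :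
    ∑ x ∈ S, ∑ y ∈ T.filter (fun y => dist1 x y = 1), g y ≤ 2 * d * ∑ y ∈ T, g y := by
  rw [sum_comm' (t' := T) (s' := fun y => S.filter fun x => dist1 y x = 1)
    (fun x y => by simp only [mem_filter, dist1_comm x y]; tauto), mul_sum]
  refine sum_le_sum fun y _ => ?_
  rw [sum_const, nsmul_eq_mul]
  gcongr
  · exact hg y
  · exact_mod_cast card_filter_dist1_eq_one_le S y

lemma mass_le_of_potential_le (hd : 0 < d) {D : Finset (Site d)} {ξ : Site d → ℝ}
    {lam : ℝ} {ψ : Site d → ℝ} (hψ : ∀ x ∈ D, hamApply D ξ ψ x = lam * ψ x) {B : ℝ}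
    (hB : 0 ≤ 2 * d + B) {S T : Finset (Site d)} (hS : S ⊆ D)
    (hξ : ∀ x ∈ S, ξ x ≤ lam - B) (hT : ∀ x ∈ S, ∀ y ∈ D, dist1 x y = 1 → y ∈ T) :
    (1 + B / (2 * d)) ^ 2 * ∑ x ∈ S, ψ x ^ 2 ≤ ∑ y ∈ T, ψ y ^ 2 := by
  have h2d : (0 : ℝ) < 2 * d := by positivity
  have hfactor : (1 + B / (2 * d)) ^ 2 * (2 * d) ^ 2 = (2 * d + B) ^ 2 := by field_simp
  refine le_of_mul_le_mul_right ?_ (pow_pos h2d 2)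
  calc (1 + B / (2 * d)) ^ 2 * (∑ x ∈ S, ψ x ^ 2) * (2 * d) ^ 2
      = ∑ x ∈ S, (2 * d + B) ^ 2 * ψ x ^ 2 := by rw [mul_right_comm, hfactor, mul_sum]
    _ ≤ ∑ x ∈ S, 2 * d * ∑ y ∈ D.filter (fun y => dist1 x y = 1), ψ y ^ 2 :=
        sum_le_sum fun x hx => mul_sq_le_sum_sq_neighbors (hψ x (hS hx)) hB (hξ x hx)
    _ ≤ ∑ x ∈ S, 2 * d * ∑ y ∈ T.filter (fun y => dist1 x y = 1), ψ y ^ 2 := by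
        refine sum_le_sum fun x hx => mul_le_mul_of_nonneg_left ?_ h2d.le
        refine sum_le_sum_of_subset_of_nonneg (fun y hy => ?_) fun _ _ _ => sq_nonneg _
        simp only [mem_filter] at hy ⊢
        exact ⟨hT x hx y hy.1 hy.2, hy.2⟩
    _ ≤ 2 * d * (2 * d * ∑ y ∈ T, ψ y ^ 2) := by
        rw [← mul_sum]
        gcongr
        exact sum_sum_neighbors_le S T fun y => sq_nonneg (ψ y)
    _ = (∑ y ∈ T, ψ y ^ 2) * (2 * d) ^ 2 := by ring

lemma pow_mul_le_of_forall_mul_le_succ {m : ℕ → ℝ} {c : ℝ} (hc : 0 ≤ c) (n : ℕ) :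
    ∀ k, (∀ r, n ≤ r → r < n + k → c * m r ≤ m (r + 1)) → c ^ k * m n ≤ m (n + k)
  | 0, _ => by simp
  | k + 1, h =>
    calc c ^ (k + 1) * m n = c * (c ^ k * m n) := by ring
      _ ≤ c * m (n + k) := by
          gcongr
          exact pow_mul_le_of_forall_mul_le_succ hc n k fun r h₁ h₂ => h r h₁ (by omega)
      _ ≤ m (n + (k + 1)) := h _ (by omega) (by omega)

def thickening (D D' : Finset (Site d)) (r : ℕ) : Finset (Site d) :=
  D.filter fun x => ∃ y ∈ D', dist1 x y ≤ r

lemma thickening_subset (D D' : Finset (Site d)) (r : ℕ) : thickening D D' r ⊆ D :=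
  filter_subset _ _

lemma subset_thickening_zero {D D' : Finset (Site d)} (hD' : D' ⊆ D) :
    D' ⊆ thickening D D' 0 :=
  fun x hx => mem_filter.mpr ⟨hD' hx, x, hx, (dist1_self x).le⟩

lemma mem_thickening_succ {D D' : Finset (Site d)} {r : ℕ} {x y : Site d}
    (hx : x ∈ thickening D D' r) (hy : y ∈ D) (hxy : dist1 x y = 1) :
    y ∈ thickening D D' (r + 1) := by
  obtain ⟨-, z, hz, hxz⟩ := mem_filter.mp hx
  refine mem_filter.mpr ⟨hy, z, hz, ?_⟩
  have := dist1_triangle y x z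
  rw [dist1_comm y x] at this
  omega

lemma pow_mul_mass_le_mass (hd : 0 < d) {D : Finset (Site d)} {ξ : Site d → ℝ}
    {lam : ℝ} {ψ : Site d → ℝ} (hψ : ∀ x ∈ D, hamApply D ξ ψ x = lam * ψ x) {A A' : ℝ}
    (hA : 0 ≤ 2 * d + A) (hA' : 0 ≤ 2 * d + A') {R : ℕ} {D' : Finset (Site d)} (hD' : D' ⊆ D)
    (hsmall : ∀ x ∈ D', ξ x ≤ lam - A')
    (hfar : ∀ x ∈ D, lam - A ≤ ξ x → ∀ y ∈ D', R ≤ dist1 x y) :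
    (1 + A' / (2 * d)) ^ 2 * (1 + A / (2 * d)) ^ (2 * (R - 1)) * ∑ x ∈ D', ψ x ^ 2 ≤
      ∑ x ∈ D, ψ x ^ 2 := by
  set m : ℕ → ℝ := fun r => ∑ x ∈ thickening D D' r, ψ x ^ 2
  have hlow : ∀ r < R, ∀ x ∈ thickening D D' r, ξ x ≤ lam - A := fun r hr x hx => by
    obtain ⟨hxD, y, hy, hxy⟩ := mem_filter.mp hx
    by_contra h
    have := hfar x hxD (not_le.mp h).le y hy
    omega
  have hfirst : (1 + A' / (2 * d)) ^ 2 * ∑ x ∈ D', ψ x ^ 2 ≤ m 1 :=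
    mass_le_of_potential_le hd hψ hA' hD' hsmall
      fun x hx y hy hxy => mem_thickening_succ (subset_thickening_zero hD' hx) hy hxy
  have hchain : ((1 + A / (2 * d)) ^ 2) ^ (R - 1) * m 1 ≤ m (1 + (R - 1)) :=
    pow_mul_le_of_forall_mul_le_succ (sq_nonneg _) 1 (R - 1) fun r _ hr =>
      mass_le_of_potential_le hd hψ hA (thickening_subset D D' r) (hlow r (by omega))
        fun x hx y hy hxy => mem_thickening_succ hx hy hxy
  calc (1 + A' / (2 * d)) ^ 2 * (1 + A / (2 * d)) ^ (2 * (R - 1)) * ∑ x ∈ D', ψ x ^ 2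
      ≤ ((1 + A / (2 * d)) ^ 2) ^ (R - 1) * m 1 := by
        rw [mul_comm ((1 + A' / (2 * d)) ^ 2), mul_assoc, pow_mul]; gcongr
    _ ≤ m (1 + (R - 1)) := hchain
    _ ≤ ∑ x ∈ D, ψ x ^ 2 :=
        sum_le_sum_of_subset_of_nonneg (thickening_subset D D' _) fun _ _ _ => sq_nonneg _

end

/-- Lemma 4.2 in the paper: ℓ² mass of an eigenfunction on a region `D'`
where the potential is small and which is far from the high points of the potential. -/
theorem mass_bound {d : ℕ} (hd : 0 < d) (D : Finset (Site d)) (ξ : Site d → ℝ)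
    (lam : ℝ) (ψ : Site d → ℝ) (hψ : IsEigen D ξ lam ψ)
    (A A' : ℝ) (hA : 0 < A) (hAA' : A ≤ A') (R : ℕ)
    (D' : Finset (Site d)) (hD' : D' ⊆ D)
    (hsmall : ∀ x ∈ D', ξ x ≤ lam - A')
    (hfar : ∀ x ∈ D, lam - A ≤ ξ x → ∀ y ∈ D', R ≤ dist1 x y) :
    ∑ x ∈ D', (ψ x) ^ 2 ≤
      (1 + A / (2 * d)) ^ ((2 : ℤ) - 2 * R) * ((1 + A' / (2 * d)) ^ (-2 : ℤ)) *
        ∑ x ∈ D, (ψ x) ^ 2 := by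
  have hA' : 0 < A' := hA.trans_le hAA'
  have hmass := pow_mul_mass_le_mass hd hψ.2.2 (by positivity) (by positivity) hD' hsmall hfar
  set u := 1 + A / (2 * d)
  set u' := 1 + A' / (2 * d)
  have hu : 1 ≤ u := le_add_of_nonneg_right (by positivity)
  have hpos : 0 < u' ^ 2 * u ^ (2 * (R - 1)) :=
    mul_pos (pow_pos (add_pos one_pos (by positivity)) 2) (pow_pos (by linarith) _)
  calc ∑ x ∈ D', ψ x ^ 2
      ≤ (u' ^ 2 * u ^ (2 * (R - 1)))⁻¹ * ∑ x ∈ D, ψ x ^ 2 := by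
        rw [← div_eq_inv_mul, le_div_iff₀' hpos]; exact hmass
    _ = u ^ (-(2 * (R - 1 : ℕ) : ℤ)) * u' ^ (-2 : ℤ) * ∑ x ∈ D, ψ x ^ 2 := by
        rw [zpow_neg, zpow_neg, mul_inv]; norm_cast; ring
    -- `R - 1` truncates at `R = 0`, where the exponent `2 - 2 * R` exceeds what is needed.
    _ ≤ u ^ ((2 : ℤ) - 2 * R) * u' ^ (-2 : ℤ) * ∑ x ∈ D, ψ x ^ 2 := by
        gcongr
        omega

end RSO
end

section
/- Let D ⊂ Z^d be finite, and U ⊆ D. For s ≥ 0, define ξ_s := ξ - s·1_{D∖U}, and let λ_D^{(k)}(ξ) denote the k-th largest eigenvalue (counted with multiplicity) of the Dirichlet operator H_{D,ξ} = Δ + ξ on D. Then for each k ∈ {1,...,|U|}: (a) the map s ↦ λ_D^{(k)}(ξ_s) is non-increasing; (b) it is Lipschitz continuous with Lipschitz constant one; and (c) λ_D^{(k)}(ξ_s) → λ_U^{(k)}(ξ) as s → ∞, where λ_U^{(k)}(ξ) is the k-th largest Dirichlet eigenvalue in U. -/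
open scoped BigOperators
open MeasureTheory

/-!
By the min-max principle, `⟪A x, x⟫ ≤ ⟪B x, x⟫ + c ‖x‖²` for all `x` implies
`λ_k(A) ≤ λ_k(B) + c`. With `P` the orthogonal projection onto the functions supported in `D ∖ U`,
the penalised operator is `H_D - s P` with `0 ≤ P ≤ 1`, so `s ↦ λ_k` is non-increasing and
1-Lipschitz. Functions supported in `U` do not feel the penalty, whence `λ_U^{(k)} ≤ λ_D^{(k)}(ξ_s)`
for every `s`. Conversely, split a vector orthogonal to the first `k - 1` eigenvectors of `H_U`
(extended by zero) as `x = p + z` with `p` supported in `U` and `z = P x`: its form is at most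
`λ_U^{(k)} ‖p‖² + 2C ‖p‖ ‖z‖ + (C - s) ‖z‖²` with `C = ‖H_D‖`, which by AM-GM is at most
`(λ_U^{(k)} + ε) ‖x‖²` once `s ≥ C - λ_U^{(k)} + C² / ε`.
-/

open Module Submodule Filter Topology
open scoped RealInnerProductSpace Matrix

theorem Submodule.exists_ne_zero_mem_of_finrank_lt_add {K V : Type*} [DivisionRing K]
    [AddCommGroup V] [Module K V] [FiniteDimensional K V] {W₁ W₂ : Submodule K V}
    (h : finrank K V < finrank K W₁ + finrank K W₂) : ∃ x ∈ W₁, x ∈ W₂ ∧ x ≠ 0 := by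
  by_contra! hW
  exact h.not_ge (finrank_add_finrank_le_of_disjoint (disjoint_def.2 hW))

section InnerProductSpace

variable {E : Type*} [NormedAddCommGroup E] [InnerProductSpace ℝ E]

theorem OrthonormalBasis.repr_eq_zero_of_mem_span {ι : Type*} [Fintype ι]
    (b : OrthonormalBasis ι ℝ E) {s : Set ι} {x : E} (hx : x ∈ span ℝ (b '' s)) {i : ι}
    (hi : i ∉ s) : b.repr x i = 0 := by
  have hle : span ℝ (b '' s) ≤ (ℝ ∙ b i)ᗮ := by
    refine span_le.2 ?_
    rintro _ ⟨j, hj, rfl⟩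
    exact mem_orthogonal_singleton_iff_inner_right.2 (b.orthonormal.2 fun h => hi (h ▸ hj))
  rw [b.repr_apply_apply]
  exact mem_orthogonal_singleton_iff_inner_right.1 (hle hx)

theorem Orthonormal.finrank_span_image {ι : Type*} {v : ι → E} (hv : Orthonormal ℝ v)
    (s : Finset ι) : finrank ℝ (span ℝ (v '' s)) = s.card := by
  rw [Set.image_eq_range]
  exact (finrank_span_eq_card (hv.linearIndependent.comp _ Subtype.val_injective)).trans
    (by simp)

theorem Submodule.inner_starProjection_self_nonneg (K : Submodule ℝ E)
    [K.HasOrthogonalProjection] (x : E) : 0 ≤ ⟪(K.starProjection : E →ₗ[ℝ] E) x, x⟫ :=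
  le_of_le_of_eq (sq_nonneg _) (K.re_inner_starProjection_eq_normSq x).symm

theorem Submodule.inner_starProjection_self_le (K : Submodule ℝ E) [K.HasOrthogonalProjection]
    (x : E) : ⟪(K.starProjection : E →ₗ[ℝ] E) x, x⟫ ≤ ‖x‖ ^ 2 :=
  le_of_eq_of_le (K.re_inner_starProjection_eq_normSq x)
    (pow_le_pow_left₀ (norm_nonneg _) (K.norm_starProjection_apply_le x) 2)

theorem LinearMap.inner_sub_smul_apply_self (T P : E →ₗ[ℝ] E) (s : ℝ) (x : E) :
    ⟪(T - s • P) x, x⟫ = ⟪T x, x⟫ - s * ⟪P x, x⟫ := by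
  simp [inner_sub_left, real_inner_smul_left]

theorem LinearMap.IsSymmetric.sub_smul {T P : E →ₗ[ℝ] E} (hT : T.IsSymmetric)
    (hP : P.IsSymmetric) (s : ℝ) : (T - s • P).IsSymmetric :=
  hT.sub (hP.smul (conj_trivial s))

variable [FiniteDimensional ℝ E]

theorem LinearMap.real_inner_apply_le_opNorm (T : E →ₗ[ℝ] E) (u v : E) :
    ⟪T u, v⟫ ≤ ‖LinearMap.toContinuousLinearMap T‖ * ‖u‖ * ‖v‖ :=
  (real_inner_le_norm _ _).trans (mul_le_mul_of_nonneg_right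
    ((LinearMap.toContinuousLinearMap T).le_opNorm u) (norm_nonneg v))

theorem LinearMap.real_inner_apply_add_le (T : E →ₗ[ℝ] E) (p z : E) :
    ⟪T (p + z), p + z⟫ ≤ ⟪T p, p⟫ + 2 * ‖LinearMap.toContinuousLinearMap T‖ * ‖p‖ * ‖z‖ +
      ‖LinearMap.toContinuousLinearMap T‖ * ‖z‖ ^ 2 := by
  have h₁ := T.real_inner_apply_le_opNorm p z
  have h₂ := T.real_inner_apply_le_opNorm z p
  have h₃ := T.real_inner_apply_le_opNorm z z
  rw [map_add, inner_add_left, inner_add_right, inner_add_right]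
  nlinarith

end InnerProductSpace

namespace LinearMap.IsSymmetric

variable {E : Type*} [NormedAddCommGroup E] [InnerProductSpace ℝ E] [FiniteDimensional ℝ E]
  {T : E →ₗ[ℝ] E} {n : ℕ} (hT : T.IsSymmetric) (hn : finrank ℝ E = n)

theorem eigenvalues_congr {T' : E →ₗ[ℝ] E} (hT' : T'.IsSymmetric) (h : T = T') :
    hT.eigenvalues hn = hT'.eigenvalues hn := by
  subst h
  rfl

theorem inner_apply_self_eq_sum (x : E) :
    ⟪T x, x⟫ = ∑ i, hT.eigenvalues hn i * (hT.eigenvectorBasis hn).repr x i ^ 2 := by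
  rw [← (hT.eigenvectorBasis hn).repr.inner_map_map, PiLp.inner_apply]
  refine Finset.sum_congr rfl fun i _ => ?_
  simp only [eigenvectorBasis_apply_self_apply, RCLike.inner_apply, conj_trivial,
    RCLike.ofReal_real_eq_id, id_eq]
  ring

theorem norm_sq_eq_sum_repr (x : E) :
    ‖x‖ ^ 2 = ∑ i, (hT.eigenvectorBasis hn).repr x i ^ 2 := by
  rw [← (hT.eigenvectorBasis hn).repr.norm_map, EuclideanSpace.norm_sq_eq]
  simp

theorem inner_apply_self_le {c : ℝ} {x : E}
    (hx : ∀ i, c < hT.eigenvalues hn i → (hT.eigenvectorBasis hn).repr x i = 0) :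
    ⟪T x, x⟫ ≤ c * ‖x‖ ^ 2 := by
  rw [hT.inner_apply_self_eq_sum hn, hT.norm_sq_eq_sum_repr hn, Finset.mul_sum]
  refine Finset.sum_le_sum fun i _ => ?_
  by_cases hi : c < hT.eigenvalues hn i
  · simp [hx i hi]
  · exact mul_le_mul_of_nonneg_right (not_lt.1 hi) (sq_nonneg _)

theorem le_inner_apply_self {c : ℝ} {x : E}
    (hx : ∀ i, hT.eigenvalues hn i < c → (hT.eigenvectorBasis hn).repr x i = 0) :
    c * ‖x‖ ^ 2 ≤ ⟪T x, x⟫ := by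
  rw [hT.inner_apply_self_eq_sum hn, hT.norm_sq_eq_sum_repr hn, Finset.mul_sum]
  refine Finset.sum_le_sum fun i _ => ?_
  by_cases hi : hT.eigenvalues hn i < c
  · simp [hx i hi]
  · exact mul_le_mul_of_nonneg_right (not_lt.1 hi) (sq_nonneg _)

theorem eigenvalues_mul_le_inner_of_mem_span_Iic {k : Fin n} {x : E}
    (hx : x ∈ span ℝ (hT.eigenvectorBasis hn '' Set.Iic k)) :
    hT.eigenvalues hn k * ‖x‖ ^ 2 ≤ ⟪T x, x⟫ :=
  hT.le_inner_apply_self hn fun _ hi => (hT.eigenvectorBasis hn).repr_eq_zero_of_mem_span hx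
    fun hik => hi.not_ge (hT.eigenvalues_antitone hn hik)

theorem inner_le_eigenvalues_mul_of_mem_span_Ici {k : Fin n} {x : E}
    (hx : x ∈ span ℝ (hT.eigenvectorBasis hn '' Set.Ici k)) :
    ⟪T x, x⟫ ≤ hT.eigenvalues hn k * ‖x‖ ^ 2 :=
  hT.inner_apply_self_le hn fun _ hi => (hT.eigenvectorBasis hn).repr_eq_zero_of_mem_span hx
    fun hki => hi.not_ge (hT.eigenvalues_antitone hn hki)

theorem finrank_span_Iic (k : Fin n) :
    finrank ℝ (span ℝ (hT.eigenvectorBasis hn '' Set.Iic k)) = k + 1 := by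
  rw [← Finset.coe_Iic, (hT.eigenvectorBasis hn).orthonormal.finrank_span_image, Fin.card_Iic]

theorem finrank_span_Ici (k : Fin n) :
    finrank ℝ (span ℝ (hT.eigenvectorBasis hn '' Set.Ici k)) = n - k := by
  rw [← Finset.coe_Ici, (hT.eigenvectorBasis hn).orthonormal.finrank_span_image, Fin.card_Ici]

theorem le_eigenvalues_of_le_inner {k : Fin n} {c : ℝ} {V : Submodule ℝ E}
    (hV : k + 1 ≤ finrank ℝ V) (h : ∀ x ∈ V, c * ‖x‖ ^ 2 ≤ ⟪T x, x⟫) :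
    c ≤ hT.eigenvalues hn k := by
  obtain ⟨x, hxV, hxW, hx0⟩ := exists_ne_zero_mem_of_finrank_lt_add (W₁ := V)
    (W₂ := span ℝ (hT.eigenvectorBasis hn '' Set.Ici k))
    (by rw [hT.finrank_span_Ici, hn]; omega)
  exact le_of_mul_le_mul_right
    ((h x hxV).trans (hT.inner_le_eigenvalues_mul_of_mem_span_Ici hn hxW)) (by positivity)

theorem eigenvalues_le_of_inner_le {k : Fin n} {c : ℝ} {V : Submodule ℝ E}
    (hV : n - k ≤ finrank ℝ V) (h : ∀ x ∈ V, ⟪T x, x⟫ ≤ c * ‖x‖ ^ 2) :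
    hT.eigenvalues hn k ≤ c := by
  obtain ⟨x, hxV, hxW, hx0⟩ := exists_ne_zero_mem_of_finrank_lt_add (W₁ := V)
    (W₂ := span ℝ (hT.eigenvectorBasis hn '' Set.Iic k))
    (by rw [hT.finrank_span_Iic, hn]; omega)
  exact le_of_mul_le_mul_right
    ((hT.eigenvalues_mul_le_inner_of_mem_span_Iic hn hxW).trans (h x hxV)) (by positivity)

theorem eigenvalues_le_add_of_inner_le {S : E →ₗ[ℝ] E} (hS : S.IsSymmetric) {c : ℝ}
    (h : ∀ x, ⟪S x, x⟫ ≤ ⟪T x, x⟫ + c * ‖x‖ ^ 2) (k : Fin n) :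
    hS.eigenvalues hn k ≤ hT.eigenvalues hn k + c := by
  have := hT.le_eigenvalues_of_le_inner hn (c := hS.eigenvalues hn k - c)
    (hS.finrank_span_Iic hn k).ge fun x hx => by
      linarith [h x, hS.eigenvalues_mul_le_inner_of_mem_span_Iic hn hx]
  linarith

section Penalty

variable {P : E →ₗ[ℝ] E} (hP : P.IsSymmetric)

theorem antitone_eigenvalues_sub_smul (hP₀ : ∀ x, 0 ≤ ⟪P x, x⟫) (k : Fin n) :
    Antitone fun s => (hT.sub_smul hP s).eigenvalues hn k := by
  intro s t hst
  simpa using (hT.sub_smul hP s).eigenvalues_le_add_of_inner_le hn (hT.sub_smul hP t) (c := 0)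
    (fun x => by
      simp only [inner_sub_smul_apply_self, zero_mul, add_zero]
      nlinarith [hP₀ x]) k

theorem lipschitzWith_eigenvalues_sub_smul (hP₀ : ∀ x, 0 ≤ ⟪P x, x⟫)
    (hP₁ : ∀ x, ⟪P x, x⟫ ≤ ‖x‖ ^ 2) (k : Fin n) :
    LipschitzWith 1 fun s => (hT.sub_smul hP s).eigenvalues hn k := by
  refine LipschitzWith.of_le_add fun s t =>
    (hT.sub_smul hP t).eigenvalues_le_add_of_inner_le hn (hT.sub_smul hP s) (fun x => ?_) k
  have h₁ : (t - s) * ⟪P x, x⟫ ≤ |t - s| * ⟪P x, x⟫ :=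
    mul_le_mul_of_nonneg_right (le_abs_self _) (hP₀ x)
  have h₂ : |t - s| * ⟪P x, x⟫ ≤ |t - s| * ‖x‖ ^ 2 :=
    mul_le_mul_of_nonneg_left (hP₁ x) (abs_nonneg _)
  rw [inner_sub_smul_apply_self, inner_sub_smul_apply_self, Real.dist_eq, abs_sub_comm]
  linarith

end Penalty

section Compression

variable {F : Type*} [NormedAddCommGroup F] [InnerProductSpace ℝ F] [FiniteDimensional ℝ F]
  {S : F →ₗ[ℝ] F} {m : ℕ} (hS : S.IsSymmetric) (hm : finrank ℝ F = m) {J : F →ₗᵢ[ℝ] E}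

theorem eigenvalues_le_eigenvalues_sub_smul_starProjection
    (hJ : ∀ y, ⟪T (J y), J y⟫ = ⟪S y, y⟫) (s : ℝ) {k : ℕ} (hkn : k < n) (hkm : k < m) :
    hS.eigenvalues hm ⟨k, hkm⟩ ≤
      (hT.sub_smul (LinearMap.range J.toLinearMap)ᗮ.starProjection_isSymmetric s).eigenvalues
        hn ⟨k, hkn⟩ := by
  set b := hS.eigenvectorBasis hm
  refine (hT.sub_smul (starProjection_isSymmetric _) s).le_eigenvalues_of_le_inner hn
    (V := span ℝ ((J ∘ b) '' Set.Iic ⟨k, hkm⟩)) ?_ fun x hx => ?_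
  · rw [← Finset.coe_Iic, (b.orthonormal.comp_linearIsometry J).finrank_span_image, Fin.card_Iic]
  obtain ⟨y, hy, rfl⟩ : x ∈ (span ℝ (b '' Set.Iic ⟨k, hkm⟩)).map J.toLinearMap := by
    rwa [← span_image, ← Set.image_comp]
  rw [inner_sub_smul_apply_self, ContinuousLinearMap.coe_coe,
    starProjection_orthogonal_apply_eq_zero (LinearMap.mem_range_self _ y)]
  simpa [hJ] using hS.eigenvalues_mul_le_inner_of_mem_span_Iic hm hy

theorem inner_sub_smul_starProjection_le_of_mem_orthogonal_span
    (hJ : ∀ y, ⟪T (J y), J y⟫ = ⟪S y, y⟫) (k : Fin m) {ε s : ℝ} (hε : 0 < ε)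
    (hs : ‖LinearMap.toContinuousLinearMap T‖ - hS.eigenvalues hm k +
      ‖LinearMap.toContinuousLinearMap T‖ ^ 2 / ε ≤ s) {x : E}
    (hx : x ∈ (span ℝ ((J ∘ hS.eigenvectorBasis hm) '' Set.Iio k))ᗮ) :
    ⟪(T - s • ((LinearMap.range J.toLinearMap)ᗮ.starProjection : E →ₗ[ℝ] E)) x, x⟫ ≤
      (hS.eigenvalues hm k + ε) * ‖x‖ ^ 2 := by
  set K := LinearMap.range J.toLinearMap
  set C := ‖LinearMap.toContinuousLinearMap T‖
  set μ := hS.eigenvalues hm k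
  obtain ⟨y, hy⟩ := LinearMap.mem_range.1 (K.starProjection_apply_mem x)
  replace hy : J y = K.starProjection x := hy
  have hSy : ⟪S y, y⟫ ≤ μ * ‖y‖ ^ 2 := by
    refine hS.inner_apply_self_le hm fun i hi => ?_
    have hik : i < k := lt_of_not_ge fun h => hi.not_ge (hS.eigenvalues_antitone hm h)
    rw [OrthonormalBasis.repr_apply_apply, ← J.inner_map_map, hy,
      ← inner_starProjection_left_eq_right,
      starProjection_eq_self_iff.2 (⟨_, rfl⟩ : J (hS.eigenvectorBasis hm i) ∈ K)]
    exact (mem_orthogonal _ x).1 hx _ (subset_span ⟨i, hik, rfl⟩)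
  set z := Kᗮ.starProjection x
  have hx' : x = J y + z := by
    rw [hy]; exact (K.starProjection_add_starProjection_orthogonal x).symm
  have hnorm : ‖x‖ ^ 2 = ‖y‖ ^ 2 + ‖z‖ ^ 2 := by
    rw [norm_sq_eq_add_norm_sq_starProjection x K, ← hy, J.norm_map]
  have hTx : ⟪T x, x⟫ ≤ μ * ‖y‖ ^ 2 + 2 * C * ‖y‖ * ‖z‖ + C * ‖z‖ ^ 2 := by
    have := T.real_inner_apply_add_le (J y) z
    rw [← hx', hJ, J.norm_map] at this
    linarith
  have hPx : ⟪(Kᗮ.starProjection : E →ₗ[ℝ] E) x, x⟫ = ‖z‖ ^ 2 :=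
    Kᗮ.re_inner_starProjection_eq_normSq x
  have hamgm : 2 * C * ‖y‖ * ‖z‖ ≤ ε * ‖y‖ ^ 2 + C ^ 2 / ε * ‖z‖ ^ 2 := by
    have := two_mul_le_add_sq (ε * ‖y‖) (C * ‖z‖)
    rw [← mul_le_mul_iff_right₀ hε]
    field_simp
    linarith
  have hs' := mul_le_mul_of_nonneg_right hs (sq_nonneg ‖z‖)
  rw [inner_sub_smul_apply_self, hPx, hnorm]
  nlinarith

theorem eventually_eigenvalues_sub_smul_starProjection_le
    (hJ : ∀ y, ⟪T (J y), J y⟫ = ⟪S y, y⟫) {k : ℕ} (hkn : k < n) (hkm : k < m)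
    {ε : ℝ} (hε : 0 < ε) :
    ∀ᶠ s in atTop,
      (hT.sub_smul (LinearMap.range J.toLinearMap)ᗮ.starProjection_isSymmetric s).eigenvalues
        hn ⟨k, hkn⟩ ≤ hS.eigenvalues hm ⟨k, hkm⟩ + ε := by
  have hW : finrank ℝ (span ℝ ((J ∘ hS.eigenvectorBasis hm) '' Set.Iio ⟨k, hkm⟩)) = k := by
    rw [← Finset.coe_Iio, ((hS.eigenvectorBasis hm).orthonormal.comp_linearIsometry
      J).finrank_span_image, Fin.card_Iio]
  set W := span ℝ ((J ∘ hS.eigenvectorBasis hm) '' Set.Iio ⟨k, hkm⟩)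
  have hW' := W.finrank_add_finrank_orthogonal
  filter_upwards [eventually_ge_atTop _] with s hs
  exact (hT.sub_smul (starProjection_isSymmetric _) s).eigenvalues_le_of_inner_le hn
    (V := Wᗮ) (by change n - k ≤ _; omega)
    fun x hx => hS.inner_sub_smul_starProjection_le_of_mem_orthogonal_span hm hJ _ hε hs hx

theorem tendsto_eigenvalues_sub_smul_starProjection (hJ : ∀ y, ⟪T (J y), J y⟫ = ⟪S y, y⟫)
    {k : ℕ} (hkn : k < n) (hkm : k < m) :
    Tendsto (fun s => (hT.sub_smul (LinearMap.range J.toLinearMap)ᗮ.starProjection_isSymmetric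
      s).eigenvalues hn ⟨k, hkn⟩) atTop (𝓝 (hS.eigenvalues hm ⟨k, hkm⟩)) := by
  refine tendsto_order.2 ⟨fun a ha => Eventually.of_forall fun s =>
    ha.trans_le (hT.eigenvalues_le_eigenvalues_sub_smul_starProjection hn hS hm hJ s hkn hkm),
    fun c hc => ?_⟩
  filter_upwards [hT.eventually_eigenvalues_sub_smul_starProjection_le hn hS hm hJ hkn hkm
    (half_pos (sub_pos.2 hc))] with s hs
  linarith

end Compression

end LinearMap.IsSymmetric

theorem Function.Embedding.sum_extend_zero_mul {ι κ : Type*} [Fintype ι] [Fintype κ]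
    (e : ι ↪ κ) (f : ι → ℝ) (g : κ → ℝ) :
    ∑ a, Function.extend e f 0 a * g a = ∑ i, f i * g (e i) := by
  classical
  rw [← Finset.sum_subset (Finset.subset_univ (Finset.univ.map e)), Finset.sum_map]
  · simp [e.injective.extend_apply]
  · intro a _ ha
    rw [Function.extend_apply' _ _ _ (by simpa using ha), Pi.zero_apply, zero_mul]

namespace EuclideanSpace

variable {ι κ : Type*} [Fintype ι] [Fintype κ] (e : ι ↪ κ)

noncomputable def extendByZero : EuclideanSpace ℝ ι →ₗᵢ[ℝ] EuclideanSpace ℝ κ :=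
  LinearMap.isometryOfInner
    ((WithLp.linearEquiv 2 ℝ (κ → ℝ)).symm.toLinearMap ∘ₗ Function.ExtendByZero.linearMap ℝ e ∘ₗ
      (WithLp.linearEquiv 2 ℝ (ι → ℝ)).toLinearMap)
    fun y y' => by
      simp only [PiLp.inner_apply, RCLike.inner_apply, conj_trivial]
      exact (e.sum_extend_zero_mul y'.ofLp _).trans (by simp [e.injective.extend_apply])

theorem extendByZero_apply (y : EuclideanSpace ℝ ι) (a : κ) :
    extendByZero e y a = Function.extend e y.ofLp 0 a := rfl

theorem inner_extendByZero_left (y : EuclideanSpace ℝ ι) (x : EuclideanSpace ℝ κ) :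
    ⟪extendByZero e y, x⟫ = ∑ i, y i * x (e i) := by
  simp only [PiLp.inner_apply, RCLike.inner_apply, conj_trivial]
  rw [Finset.sum_congr rfl fun a _ => mul_comm _ _]
  exact e.sum_extend_zero_mul y.ofLp x.ofLp

theorem toEuclideanLin_diagonal_indicator_compl_range [DecidableEq κ] :
    Matrix.toEuclideanLin (Matrix.diagonal ((Set.range e)ᶜ.indicator 1)) =
      ((LinearMap.range (extendByZero e).toLinearMap)ᗮ.starProjection :
        EuclideanSpace ℝ κ →ₗ[ℝ] EuclideanSpace ℝ κ) := by
  set K := LinearMap.range (extendByZero e).toLinearMap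
  ext1 x
  refine (eq_starProjection_of_mem_orthogonal' (z := extendByZero e (WithLp.toLp 2 (x ∘ e)))
    ((mem_orthogonal _ _).2 ?_) (K.le_orthogonal_orthogonal ⟨_, rfl⟩) ?_).symm
  · rintro _ ⟨y, rfl⟩
    simp [inner_extendByZero_left, Matrix.mulVec_diagonal]
  ext a
  by_cases ha : a ∈ Set.range e
  · obtain ⟨i, rfl⟩ := ha
    simp [extendByZero_apply, e.injective.extend_apply, Matrix.mulVec_diagonal]
  · simp [Set.indicator_of_mem (Set.mem_compl ha), extendByZero_apply,
      Function.extend_apply' _ _ _ ha, Matrix.mulVec_diagonal]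

theorem mulVec_extend_apply (A : Matrix κ κ ℝ) (y : ι → ℝ) (i : ι) :
    (A *ᵥ Function.extend e y 0) (e i) = (A.submatrix e e *ᵥ y) i := by
  simp only [Matrix.mulVec, dotProduct, Matrix.submatrix_apply]
  rw [Finset.sum_congr rfl fun a _ => mul_comm _ _, e.sum_extend_zero_mul]
  exact Finset.sum_congr rfl fun _ _ => mul_comm _ _

theorem inner_toEuclideanLin_extendByZero [DecidableEq ι] [DecidableEq κ] (A : Matrix κ κ ℝ)
    (y : EuclideanSpace ℝ ι) :
    ⟪Matrix.toEuclideanLin A (extendByZero e y), extendByZero e y⟫ =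
      ⟪Matrix.toEuclideanLin (A.submatrix e e) y, y⟫ := by
  rw [real_inner_comm, inner_extendByZero_left, real_inner_comm]
  simp only [PiLp.inner_apply, RCLike.inner_apply, conj_trivial, Matrix.ofLp_toLpLin,
    Matrix.toLin'_apply]
  exact Finset.sum_congr rfl fun i _ => by rw [mul_comm, ← mulVec_extend_apply]; rfl

end EuclideanSpace

theorem Matrix.IsHermitian.getD_insertionSort_eigenvalues {ι : Type*} [Fintype ι]
    [DecidableEq ι] {A : Matrix ι ι ℝ} (hA : A.IsHermitian) {k : ℕ} (hk : k < Fintype.card ι) :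
    (List.insertionSort (fun a b : ℝ => b ≤ a)
        (Finset.univ.val.map hA.eigenvalues).toList).getD k 0 = hA.eigenvalues₀ ⟨k, hk⟩ := by
  have hroots := hA.roots_charpoly_eq_eigenvalues.symm.trans hA.roots_charpoly_eq_eigenvalues₀
  simp only [RCLike.ofReal_real_eq_id, Function.id_comp] at hroots
  have hperm : (List.insertionSort (fun a b : ℝ => b ≤ a)
      (Finset.univ.val.map hA.eigenvalues).toList).Perm (List.ofFn hA.eigenvalues₀) := by
    refine (List.perm_insertionSort _ _).trans ?_
    rw [← Multiset.coe_eq_coe, Multiset.coe_toList, hroots, ← Fin.univ_val_map]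
  rw [hperm.eq_of_pairwise' (List.pairwise_insertionSort _ _)
      (List.sortedGE_iff_pairwise.1 hA.eigenvalues₀_antitone.sortedGE_ofFn),
    List.getD_eq_getElem _ _ (by simpa using hk), List.getElem_ofFn]

namespace RSO

theorem lambdaK_eq_eigenvalues {d : ℕ} (D : Finset (Site d)) (ξ : Site d → ℝ) {k : ℕ}
    (hk : k - 1 < Fintype.card D) :
    lambdaK D ξ k = (Matrix.isSymmetric_toEuclideanLin_iff.2 (matH_isHermitian D ξ)).eigenvalues
      finrank_euclideanSpace ⟨k - 1, hk⟩ := by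
  rw [lambdaK, ← Finset.univ_eq_attach]
  exact (matH_isHermitian D ξ).getD_insertionSort_eigenvalues hk

section Restriction

variable {d : ℕ} {D U : Finset (Site d)}

def subsetEmbedding (hU : U ⊆ D) : U ↪ D :=
  ⟨fun u => ⟨u, hU u.2⟩, fun _ _ h => Subtype.ext (Subtype.mk.inj h)⟩

theorem indicator_compl_range_subsetEmbedding (hU : U ⊆ D) (a : D) :
    (Set.range (subsetEmbedding hU))ᶜ.indicator (1 : D → ℝ) a =
      if (a : Site d) ∈ U then 0 else 1 := by
  by_cases ha : (a : Site d) ∈ U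
  · rw [if_pos ha, Set.indicator_of_notMem (not_not.2 ⟨⟨a, ha⟩, rfl⟩)]
  · rw [if_neg ha, Set.indicator_of_mem (fun ⟨u, hu⟩ => ha (hu ▸ u.2)), Pi.one_apply]

theorem matH_submatrix_subsetEmbedding (hU : U ⊆ D) (ξ : Site d → ℝ) :
    (matH D ξ).submatrix (subsetEmbedding hU) (subsetEmbedding hU) = matH U ξ := by
  ext u v
  simp only [Matrix.submatrix_apply, matH, (subsetEmbedding hU).injective.eq_iff]
  rfl

theorem matH_sub_smul_indicator (hU : U ⊆ D) (ξ : Site d → ℝ) (s : ℝ) :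
    matH D (fun x => if x ∈ D \ U then ξ x - s else ξ x) =
      matH D ξ - s • Matrix.diagonal ((Set.range (subsetEmbedding hU))ᶜ.indicator 1) := by
  ext a b
  by_cases hab : a = b
  · subst hab
    by_cases ha : (a : Site d) ∈ U
    · simp [matH, ha, indicator_compl_range_subsetEmbedding]
    · simp [matH, ha, indicator_compl_range_subsetEmbedding]
      ring
  · simp [matH, hab]

end Restriction

theorem eigenvalue_shift_general {d : ℕ}
    (D U : Finset (Site d)) (hU : U ⊆ D) (ξ : Site d → ℝ)
    (k : ℕ) (hk1 : 1 ≤ k) (hk2 : k ≤ U.card) :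
    AntitoneOn (fun s : ℝ => lambdaK D (fun x => if x ∈ D \ U then ξ x - s else ξ x) k)
        (Set.Ici (0 : ℝ)) ∧
      LipschitzOnWith 1
        (fun s : ℝ => lambdaK D (fun x => if x ∈ D \ U then ξ x - s else ξ x) k)
        (Set.Ici (0 : ℝ)) ∧
      Filter.Tendsto
        (fun s : ℝ => lambdaK D (fun x => if x ∈ D \ U then ξ x - s else ξ x) k)
        Filter.atTop (nhds (lambdaK U ξ k)) := by
  have hkU : k - 1 < Fintype.card U := by rw [Fintype.card_coe]; omega
  have hkD : k - 1 < Fintype.card D := by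
    have := Finset.card_le_card hU
    rw [Fintype.card_coe]; omega
  set J := EuclideanSpace.extendByZero (subsetEmbedding hU)
  set K := LinearMap.range J.toLinearMap
  have hT := Matrix.isSymmetric_toEuclideanLin_iff.2 (matH_isHermitian D ξ)
  have hS := Matrix.isSymmetric_toEuclideanLin_iff.2 (matH_isHermitian U ξ)
  have hP := Kᗮ.starProjection_isSymmetric
  have hJ (y) : ⟪Matrix.toEuclideanLin (matH D ξ) (J y), J y⟫ =
      ⟪Matrix.toEuclideanLin (matH U ξ) y, y⟫ := by
    rw [EuclideanSpace.inner_toEuclideanLin_extendByZero, matH_submatrix_subsetEmbedding]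
  have hlam (s : ℝ) : lambdaK D (fun x => if x ∈ D \ U then ξ x - s else ξ x) k =
      (hT.sub_smul hP s).eigenvalues finrank_euclideanSpace ⟨k - 1, hkD⟩ := by
    rw [lambdaK_eq_eigenvalues D _ hkD]
    refine congrFun (LinearMap.IsSymmetric.eigenvalues_congr _ _ _ ?_) _
    rw [matH_sub_smul_indicator hU, map_sub, map_smul,
      EuclideanSpace.toEuclideanLin_diagonal_indicator_compl_range]
  simp only [hlam, lambdaK_eq_eigenvalues U ξ hkU]
  have hP₀ := Kᗮ.inner_starProjection_self_nonneg
  have hP₁ := Kᗮ.inner_starProjection_self_le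
  exact ⟨(hT.antitone_eigenvalues_sub_smul _ hP hP₀ _).antitoneOn _,
    (hT.lipschitzWith_eigenvalues_sub_smul _ hP hP₀ hP₁ _).lipschitzOnWith,
    hT.tendsto_eigenvalues_sub_smul_starProjection _ hS _ hJ hkD hkU⟩

/-- Lemma 4.3: for `ξ_s := ξ - s·1_{D∖U}`, the map `s ↦ λ_D^{(k)}(ξ_s)`
is (a) non-increasing on `[0,∞)`, (b) 1-Lipschitz on `[0,∞)`, and (c) converges to
`λ_U^{(k)}(ξ)` as `s → ∞`. -/
theorem eigenvalue_shift {d : ℕ} (hd : 0 < d)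
    (D U : Finset (Site d)) (hU : U ⊆ D) (ξ : Site d → ℝ)
    (k : ℕ) (hk1 : 1 ≤ k) (hk2 : k ≤ U.card) :
    AntitoneOn (fun s : ℝ => lambdaK D (fun x => if x ∈ D \ U then ξ x - s else ξ x) k)
        (Set.Ici (0 : ℝ)) ∧
      LipschitzOnWith 1
        (fun s : ℝ => lambdaK D (fun x => if x ∈ D \ U then ξ x - s else ξ x) k)
        (Set.Ici (0 : ℝ)) ∧
      Filter.Tendsto
        (fun s : ℝ => lambdaK D (fun x => if x ∈ D \ U then ξ x - s else ξ x) k)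
        Filter.atTop (nhds (lambdaK U ξ k)) :=
  eigenvalue_shift_general D U hU ξ k hk1 hk2

end RSO
end

section
/- Let C ⊂ Z^d be finite, ξ: C → R, and let ψ be an eigenfunction of H_{C,ξ} corresponding to the second largest eigenvalue λ_C^{(2)}(ξ). Let B := {x ∈ C : ψ(x) ≥ 0}. Then both B and C∖B are nonempty, and λ_C^{(2)}(ξ) ≤ min{λ_B^{(1)}(ξ), λ_{C∖B}^{(1)}(ξ)}, where λ_V^{(1)} denotes the largest Dirichlet eigenvalue in V. -/
open scoped BigOperators
open MeasureTheory

namespace RSO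

/-!
Since `ψ` is orthogonal to the positive principal eigenfunction, it changes sign, so `B` and
`C \ B` are nonempty. On `B` we have `ψ ≥ 0` and `H_B ψ ≥ H_C ψ = λ₂ ψ`, because the neighbours
dropped from the sum carry negative values of `ψ`; hence the Rayleigh quotient of `ψ` on `B` is at
least `λ₂`, and it is at most `λ_B^{(1)}`. The same argument for `-ψ` on `C \ B` gives the other
bound.
-/

open Matrix in
open scoped ComplexOrder in
lemma _root_.Matrix.IsHermitian.posSemidef_smul_one_sub {n 𝕜 : Type*} [Fintype n]
    [DecidableEq n] [RCLike 𝕜] {A : Matrix n n 𝕜} (hA : A.IsHermitian) {μ : ℝ}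
    (h : ∀ i, hA.eigenvalues i ≤ μ) : ((μ : 𝕜) • 1 - A).PosSemidef := by
  rw [hA.spectral_theorem, ← map_one (Unitary.conjStarAlgAut 𝕜 _ hA.eigenvectorUnitary),
    ← map_smul, ← map_sub, Unitary.conjStarAlgAut_apply, smul_one_eq_diagonal, diagonal_sub,
    Unitary.isUnit_coe.posSemidef_star_right_conjugate_iff, posSemidef_diagonal_iff]
  intro i
  rw [Function.comp_apply, ← RCLike.ofReal_sub, RCLike.ofReal_nonneg]
  exact sub_nonneg.mpr (h i)

open Matrix in
lemma _root_.Matrix.IsHermitian.dotProduct_mulVec_le {n : Type*} [Fintype n] [DecidableEq n]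
    {A : Matrix n n ℝ} (hA : A.IsHermitian) {μ : ℝ} (h : ∀ i, hA.eigenvalues i ≤ μ)
    (v : n → ℝ) : v ⬝ᵥ A *ᵥ v ≤ μ * (v ⬝ᵥ v) := by
  have := (hA.posSemidef_smul_one_sub h).dotProduct_mulVec_nonneg v
  rw [star_trivial, sub_mulVec, smul_mulVec, one_mulVec, dotProduct_sub, dotProduct_smul,
    smul_eq_mul, sub_nonneg] at this
  exact this

lemma _root_.List.le_getD_zero_of_pairwise_ge {α : Type*} [Preorder α] {l : List α}
    (hl : l.Pairwise (fun a b => b ≤ a)) {a : α} (ha : a ∈ l) (default : α) :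
    a ≤ l.getD 0 default := by
  cases l with
  | nil => simp at ha
  | cons x t =>
    rcases List.mem_cons.mp ha with rfl | ht
    · exact le_rfl
    · exact (List.pairwise_cons.mp hl).1 a ht

lemma eigenvalues_le_lambdaK_one {d : ℕ} (D : Finset (Site d)) (ξ : Site d → ℝ) (i : D) :
    (matH_isHermitian D ξ).eigenvalues i ≤ lambdaK D ξ 1 := by
  refine List.le_getD_zero_of_pairwise_ge (List.pairwise_insertionSort _ _) ?_ 0
  rw [(List.perm_insertionSort _ _).mem_iff, Multiset.mem_toList]
  exact Multiset.mem_map_of_mem _ (Finset.mem_attach D i)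

open Matrix in
lemma matH_mulVec {d : ℕ} (D : Finset (Site d)) (ξ : Site d → ℝ) (f : Site d → ℝ) (x : D) :
    (matH D ξ *ᵥ fun y : D => f y) x = hamApply D ξ f x := by
  simp only [mulVec, dotProduct, matH, hamApply, add_mul, ite_mul, one_mul, zero_mul,
    Finset.sum_add_distrib, Finset.sum_ite_eq, Finset.mem_univ, if_true]
  rw [Finset.sum_filter, ← Finset.sum_coe_sort D]

open Matrix in
/-- Multiplying the subsolution inequality by `f ≥ 0` and summing bounds the Rayleigh quotient
of `f` from below by `lam`; from above it is bounded by the top eigenvalue. -/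
lemma le_lambdaK_one_of_le_hamApply {d : ℕ} {D : Finset (Site d)} {ξ : Site d → ℝ} {lam : ℝ}
    {f : Site d → ℝ} (hf : ∀ x ∈ D, 0 ≤ f x) (hf_ne : ∃ x ∈ D, f x ≠ 0)
    (hsub : ∀ x ∈ D, lam * f x ≤ hamApply D ξ f x) : lam ≤ lambdaK D ξ 1 := by
  set v : D → ℝ := fun x => f x
  obtain ⟨x₀, hx₀D, hx₀⟩ := hf_ne
  have hv_pos : 0 < v ⬝ᵥ v :=
    Finset.sum_pos' (fun x _ => mul_self_nonneg (v x))
      ⟨⟨x₀, hx₀D⟩, Finset.mem_univ _, mul_self_pos.mpr hx₀⟩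
  have hrayleigh : lam * (v ⬝ᵥ v) ≤ v ⬝ᵥ matH D ξ *ᵥ v := by
    rw [dotProduct, dotProduct, Finset.mul_sum]
    refine Finset.sum_le_sum fun x _ => ?_
    rw [matH_mulVec, ← mul_assoc, mul_comm lam, mul_assoc]
    exact mul_le_mul_of_nonneg_left (hsub x x.2) (hf x x.2)
  have hupper := (matH_isHermitian D ξ).dotProduct_mulVec_le (eigenvalues_le_lambdaK_one D ξ) v
  exact le_of_mul_le_mul_right (hrayleigh.trans hupper) hv_pos

lemma hamApply_neg {d : ℕ} (D : Finset (Site d)) (ξ : Site d → ℝ) (f : Site d → ℝ)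
    (x : Site d) : hamApply D ξ (-f) x = -hamApply D ξ f x := by
  simp only [hamApply, Pi.neg_apply, Finset.sum_neg_distrib]
  ring

lemma hamApply_le_hamApply_of_subset {d : ℕ} {C D : Finset (Site d)} (hDC : D ⊆ C)
    (ξ : Site d → ℝ) {f : Site d → ℝ} (hf : ∀ x ∈ C \ D, f x ≤ 0) (x : Site d) :
    hamApply C ξ f x ≤ hamApply D ξ f x := by
  simp only [hamApply, add_le_add_iff_right]
  rw [← Finset.sum_sdiff (Finset.filter_subset_filter _ hDC)]
  refine add_le_of_nonpos_left (Finset.sum_nonpos fun y hy => hf y ?_)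
  simp only [Finset.mem_sdiff, Finset.mem_filter] at hy ⊢
  tauto

lemma le_lambdaK_one_of_eigenfunction_nonneg_on {d : ℕ} {C D : Finset (Site d)} (hDC : D ⊆ C)
    {ξ : Site d → ℝ} {lam : ℝ} {ψ : Site d → ℝ} (hψ : ∀ x ∈ C, hamApply C ξ ψ x = lam * ψ x)
    (hD : ∀ x ∈ D, 0 ≤ ψ x) (hCD : ∀ x ∈ C \ D, ψ x ≤ 0) (hψ_ne : ∃ x ∈ D, ψ x ≠ 0) :
    lam ≤ lambdaK D ξ 1 :=
  le_lambdaK_one_of_le_hamApply hD hψ_ne fun x hx =>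
    (hψ x (hDC hx)).symm.le.trans (hamApply_le_hamApply_of_subset hDC ξ hCD x)

lemma IsEigen.exists_ne_zero {d : ℕ} {C : Finset (Site d)} {ξ : Site d → ℝ} {lam : ℝ}
    {ψ : Site d → ℝ} (hψ : IsEigen C ξ lam ψ) : ∃ x ∈ C, ψ x ≠ 0 := by
  by_contra! h
  exact hψ.2.1 (funext fun x => if hx : x ∈ C then h x hx else hψ.1 x hx)

lemma exists_pos_of_sum_mul_eq_zero {ι : Type*} {s : Finset ι} {φ ψ : ι → ℝ}
    (hφ : ∀ x ∈ s, 0 < φ x) (horth : ∑ x ∈ s, φ x * ψ x = 0) (hψ : ∃ x ∈ s, ψ x ≠ 0) :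
    ∃ x ∈ s, 0 < ψ x := by
  by_contra! h
  obtain ⟨x₀, hx₀s, hx₀⟩ := hψ
  have hneg : ∑ x ∈ s, φ x * ψ x < 0 :=
    Finset.sum_neg' (fun x hx => mul_nonpos_of_nonneg_of_nonpos (hφ x hx).le (h x hx))
      ⟨x₀, hx₀s, mul_neg_of_pos_of_neg (hφ x₀ hx₀s) ((h x₀ hx₀s).lt_of_ne hx₀)⟩
  exact hneg.ne horth

open Classical in
theorem second_eigenvalue_nodal_general {d : ℕ}
    (C : Finset (Site d)) (ξ : Site d → ℝ) (ψ φ : Site d → ℝ)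
    (hψ : IsEigen C ξ (lambdaK C ξ 2) ψ)
    (hφpos : ∀ x ∈ C, 0 < φ x)
    (horth : ∑ x ∈ C, φ x * ψ x = 0) :
    (C.filter (fun x => 0 ≤ ψ x)).Nonempty ∧
      (C \ C.filter (fun x => 0 ≤ ψ x)).Nonempty ∧
      lambdaK C ξ 2 ≤
        min (lambdaK (C.filter (fun x => 0 ≤ ψ x)) ξ 1)
          (lambdaK (C \ C.filter (fun x => 0 ≤ ψ x)) ξ 1) := by
  set B := C.filter (fun x => 0 ≤ ψ x)
  have hψ_ne := hψ.exists_ne_zero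
  obtain ⟨xp, hxpC, hxp⟩ := exists_pos_of_sum_mul_eq_zero hφpos horth hψ_ne
  obtain ⟨xn, hxnC, hxn⟩ := exists_pos_of_sum_mul_eq_zero (ψ := -ψ) hφpos
    (by simp only [Pi.neg_apply, mul_neg, Finset.sum_neg_distrib, horth, neg_zero])
    (by simpa only [Pi.neg_apply, neg_ne_zero] using hψ_ne)
  have hxpB : xp ∈ B := Finset.mem_filter.mpr ⟨hxpC, hxp.le⟩
  have hxnB : xn ∈ C \ B := by simp [B, hxnC, neg_pos.mp hxn]
  have hneg_eigen : ∀ x ∈ C, hamApply C ξ (-ψ) x = lambdaK C ξ 2 * (-ψ) x := fun x hx => by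
    rw [hamApply_neg, hψ.2.2 x hx, Pi.neg_apply, mul_neg]
  have hψ_neg : ∀ x ∈ C \ B, ψ x < 0 := fun x hx => by
    simp only [B, Finset.mem_sdiff, Finset.mem_filter, not_and, not_le] at hx
    exact hx.2 hx.1
  refine ⟨⟨xp, hxpB⟩, ⟨xn, hxnB⟩, le_min ?_ ?_⟩
  · exact le_lambdaK_one_of_eigenfunction_nonneg_on (Finset.filter_subset _ _) hψ.2.2
      (fun x hx => (Finset.mem_filter.mp hx).2) (fun x hx => (hψ_neg x hx).le)
      ⟨xp, hxpB, hxp.ne'⟩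
  · refine le_lambdaK_one_of_eigenfunction_nonneg_on Finset.sdiff_subset hneg_eigen
      (fun x hx => neg_nonneg.mpr (hψ_neg x hx).le) (fun x hx => ?_) ⟨xn, hxnB, hxn.ne'⟩
    rw [Finset.sdiff_sdiff_eq_self (Finset.filter_subset _ _)] at hx
    exact neg_nonpos.mpr (Finset.mem_filter.mp hx).2

open Classical in
/-- nodal-domain bound for the second eigenvalue: if `ψ` is an
eigenfunction for the second largest Dirichlet eigenvalue of `Δ+ξ` on `C`, orthogonal to a
(strictly positive on `C`) principal eigenfunction, and `B := {x ∈ C : ψ(x) ≥ 0}`, then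
`B` and `C ∖ B` are nonempty and `λ_C^{(2)}(ξ) ≤ min{λ_B^{(1)}(ξ), λ_{C∖B}^{(1)}(ξ)}`. -/
theorem second_eigenvalue_nodal {d : ℕ} (hd : 0 < d)
    (C : Finset (Site d)) (ξ : Site d → ℝ) (ψ φ : Site d → ℝ)
    (hψ : IsEigen C ξ (lambdaK C ξ 2) ψ)
    (hφ : IsEigen C ξ (lambdaK C ξ 1) φ)
    (hφpos : ∀ x ∈ C, 0 < φ x)
    (horth : ∑ x ∈ C, φ x * ψ x = 0) :
    (C.filter (fun x => 0 ≤ ψ x)).Nonempty ∧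
      (C \ C.filter (fun x => 0 ≤ ψ x)).Nonempty ∧
      lambdaK C ξ 2 ≤
        min (lambdaK (C.filter (fun x => 0 ≤ ψ x)) ξ 1)
          (lambdaK (C \ C.filter (fun x => 0 ≤ ψ x)) ξ 1) :=
  second_eigenvalue_nodal_general C ξ ψ φ hψ hφpos horth

end RSO
end

section
/- Fix ρ > 0. For finite C ⊂ Z^d, define L_C(φ) := Σ_{x∈C} e^{φ(x)/ρ} and χ_C := -sup{λ_C^{(1)}(φ) : φ ∈ R^{Z^d}, L_C(φ) ≤ 1}. If ξ: C → R satisfies λ_C^{(1)}(ξ) - λ_C^{(2)}(ξ) ≤ K for some K ≥ 0, then λ_C^{(1)}(ξ) - ρ log L_C(ξ) ≤ -χ_C + K - ρ log 2. -/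
open scoped BigOperators
open MeasureTheory

namespace RSO

/-- The large-deviation functional `L_C(φ) = Σ_{x∈C} e^{φ(x)/ρ}`. -/
noncomputable def LC {d : ℕ} (ρ : ℝ) (C : Finset (Site d)) (φ : Site d → ℝ) : ℝ :=
  ∑ x ∈ C, Real.exp (φ x / ρ)

/-- `χ_C := -sup{λ_C^{(1)}(φ) : L_C(φ) ≤ 1}`. -/
noncomputable def chi {d : ℕ} (ρ : ℝ) (C : Finset (Site d)) : ℝ :=
  -sSup ((fun φ : Site d → ℝ => lambdaK C φ 1) '' {φ : Site d → ℝ | LC ρ C φ ≤ 1})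

end RSO

/-!
Nodal domains of the top two eigenfunctions split `C` into two nonempty pieces `B` and `C \ B`
whose principal eigenvalues both dominate `λ_C^{(2)}(ξ)`. Since `L_C = L_B + L_{C∖B}`, one piece,
call it `B₀`, carries at most half of the mass, so `ρ log L_{B₀}(ξ) ≤ ρ log L_C(ξ) - ρ log 2`.
Shifting `ξ` by the constant `-ρ log L_{B₀}(ξ)` gives an admissible potential for `χ_{B₀}`,
whence `λ_{B₀}^{(1)}(ξ) - ρ log L_{B₀}(ξ) ≤ -χ_{B₀} ≤ -χ_C`, and the gap hypothesis
`λ_C^{(1)} ≤ λ_C^{(2)} + K` finishes the proof.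
-/

namespace Matrix.IsHermitian

variable {n : Type*} [Fintype n] [DecidableEq n] {A : Matrix n n ℝ} (hA : A.IsHermitian)

theorem dotProduct_mulVec_le_s6 {c : ℝ} (hc : ∀ i, hA.eigenvalues i ≤ c) (v : n → ℝ) :
    v ⬝ᵥ (A *ᵥ v) ≤ c * (v ⬝ᵥ v) := by
  have hpsd : (c • 1 - A).PosSemidef := by
    have hdiag : c • (1 : Matrix n n ℝ) - diagonal (RCLike.ofReal ∘ hA.eigenvalues)
        = diagonal fun i => c - hA.eigenvalues i := by
      ext i j; by_cases h : i = j <;> simp [h, diagonal]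
    rw [hA.spectral_theorem, ← map_one (Unitary.conjStarAlgAut ℝ _ hA.eigenvectorUnitary),
      ← map_smul, ← map_sub, hdiag, Unitary.conjStarAlgAut_apply,
      IsUnit.posSemidef_star_right_conjugate_iff Unitary.isUnit_coe, posSemidef_diagonal_iff]
    exact fun i => sub_nonneg.mpr (hc i)
  have := hpsd.dotProduct_mulVec_nonneg v
  simp only [star_trivial, sub_mulVec, smul_mulVec, one_mulVec, dotProduct_sub, dotProduct_smul,
    smul_eq_mul] at this
  linarith

theorem insertionSort_eigenvalues :
    List.insertionSort (fun a b : ℝ => b ≤ a) (Finset.univ.val.map hA.eigenvalues).toList =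
      List.ofFn hA.eigenvalues₀ := by
  refine List.Perm.eq_of_sortedGE List.sortedGE_insertionSort
    hA.eigenvalues₀_antitone.sortedGE_ofFn ((List.perm_insertionSort _ _).trans ?_)
  have : hA.eigenvalues = hA.eigenvalues₀ ∘ (Fintype.equivOfCardEq (Fintype.card_fin _)).symm :=
    rfl
  rw [← Multiset.coe_eq_coe, Multiset.coe_toList, ← Fin.univ_val_map, this, ← Multiset.map_map,
    Multiset.map_univ_val_equiv]

theorem eigenvalues_equivOfCardEq (k : Fin (Fintype.card n)) :
    hA.eigenvalues (Fintype.equivOfCardEq (Fintype.card_fin _) k) = hA.eigenvalues₀ k := by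
  simp [eigenvalues]

theorem eigenvalues_le_eigenvalues₀_zero (hn : 0 < Fintype.card n) (i : n) :
    hA.eigenvalues i ≤ hA.eigenvalues₀ ⟨0, hn⟩ :=
  hA.eigenvalues₀_antitone (Nat.zero_le _)

end Matrix.IsHermitian

namespace RSO

open Matrix

variable {d : ℕ}

theorem lambdaK_succ_eq_eigenvalues₀ (D : Finset (Site d)) (ξ : Site d → ℝ)
    (k : Fin (Fintype.card D)) :
    lambdaK D ξ (k + 1) = (matH_isHermitian D ξ).eigenvalues₀ k := by
  have hk : (k : ℕ) < D.card := Fintype.card_coe D ▸ k.isLt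
  rw [lambdaK, ← Finset.univ_eq_attach, Matrix.IsHermitian.insertionSort_eigenvalues]
  simp [hk]

noncomputable def quadForm (D : Finset (Site d)) (ξ : Site d → ℝ) (f : Site d → ℝ) : ℝ :=
  ∑ x ∈ D, f x * hamApply D ξ f x

section Spectrum

variable {D : Finset (Site d)} {ξ : Site d → ℝ}

theorem hamApply_eq_mulVec (f : Site d → ℝ) {x : Site d} (hx : x ∈ D) :
    hamApply D ξ f x = (matH D ξ *ᵥ fun y : D => f y) ⟨x, hx⟩ := by
  simp only [mulVec, dotProduct, matH, add_mul, ite_mul, one_mul, zero_mul,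
    Finset.sum_add_distrib, Finset.sum_ite_eq, Finset.mem_univ, if_true, hamApply]
  rw [Finset.sum_filter, ← Finset.sum_coe_sort]

theorem quadForm_le_lambdaK_one (hD : D.Nonempty) (f : Site d → ℝ) :
    quadForm D ξ f ≤ lambdaK D ξ 1 * ∑ x ∈ D, f x ^ 2 := by
  have hk : 0 < Fintype.card D := by simpa using hD.card_pos
  have hle (i : D) : (matH_isHermitian D ξ).eigenvalues i ≤ lambdaK D ξ 1 := by
    simpa [lambdaK_succ_eq_eigenvalues₀ D ξ ⟨0, hk⟩] using
      (matH_isHermitian D ξ).eigenvalues_le_eigenvalues₀_zero hk i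
  calc quadForm D ξ f = ∑ x : D, f x * (matH D ξ *ᵥ fun y : D => f y) x := by
        rw [quadForm, ← Finset.sum_coe_sort]
        exact Finset.sum_congr rfl fun x _ => by rw [hamApply_eq_mulVec f x.2]
    _ ≤ lambdaK D ξ 1 * ∑ x : D, f x * f x :=
        (matH_isHermitian D ξ).dotProduct_mulVec_le_s6 hle fun y : D => f y
    _ = lambdaK D ξ 1 * ∑ x ∈ D, f x ^ 2 := by
        simp only [sq, Finset.sum_coe_sort D fun x => f x * f x]

noncomputable def eigenfunction (D : Finset (Site d)) (ξ : Site d → ℝ) (i : D) : Site d → ℝ :=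
  fun x => if h : x ∈ D then (matH_isHermitian D ξ).eigenvectorBasis i ⟨x, h⟩ else 0

theorem isEigen_eigenfunction (i : D) :
    IsEigen D ξ ((matH_isHermitian D ξ).eigenvalues i) (eigenfunction D ξ i) := by
  have hrestrict :
      (fun y : D => eigenfunction D ξ i y) = (matH_isHermitian D ξ).eigenvectorBasis i :=
    funext fun y => by simp [eigenfunction]
  refine ⟨fun x hx => dif_neg hx, fun h => ?_, fun x hx => ?_⟩
  · refine (matH_isHermitian D ξ).eigenvectorBasis.orthonormal.ne_zero i ?_
    ext y
    simpa [eigenfunction] using congrFun h y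
  · rw [hamApply_eq_mulVec _ hx, hrestrict, Matrix.IsHermitian.mulVec_eigenvectorBasis]
    simp [eigenfunction, hx]

theorem sum_eigenfunction_mul_of_ne {i j : D} (hij : i ≠ j) :
    ∑ x ∈ D, eigenfunction D ξ i x * eigenfunction D ξ j x = 0 := by
  have := (matH_isHermitian D ξ).eigenvectorBasis.orthonormal.2 hij
  rw [← Finset.sum_coe_sort]
  simpa [eigenfunction, PiLp.inner_apply, mul_comm] using this

theorem isEigen_lambdaK_succ (k : Fin (Fintype.card D)) :
    IsEigen D ξ (lambdaK D ξ (k + 1))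
      (eigenfunction D ξ (Fintype.equivOfCardEq (Fintype.card_fin _) k)) := by
  rw [lambdaK_succ_eq_eigenvalues₀, ← Matrix.IsHermitian.eigenvalues_equivOfCardEq]
  exact isEigen_eigenfunction _

theorem exists_isEigen_lambdaK_one (hD : D.Nonempty) : ∃ ψ, IsEigen D ξ (lambdaK D ξ 1) ψ :=
  ⟨_, by simpa using isEigen_lambdaK_succ (ξ := ξ) ⟨0, by simpa using hD.card_pos⟩⟩

theorem exists_isEigen_pair (hD : 2 ≤ D.card) :
    ∃ ψ φ, IsEigen D ξ (lambdaK D ξ 2) ψ ∧ IsEigen D ξ (lambdaK D ξ 1) φ ∧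
      ∑ x ∈ D, ψ x * φ x = 0 := by
  have hD' : 2 ≤ Fintype.card D := by simpa using hD
  refine ⟨_, _, by simpa using isEigen_lambdaK_succ (ξ := ξ) ⟨1, hD'⟩,
    by simpa using isEigen_lambdaK_succ (ξ := ξ) ⟨0, by omega⟩,
    sum_eigenfunction_mul_of_ne ?_⟩
  simp

theorem lambdaK_two_le_one (hD : 2 ≤ D.card) : lambdaK D ξ 2 ≤ lambdaK D ξ 1 := by
  have hD' : 2 ≤ Fintype.card D := by simpa using hD
  have h₂ := lambdaK_succ_eq_eigenvalues₀ D ξ ⟨1, hD'⟩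
  have h₁ := lambdaK_succ_eq_eigenvalues₀ D ξ ⟨0, by omega⟩
  simp only [zero_add, Nat.reduceAdd] at h₁ h₂
  rw [h₁, h₂]
  exact (matH_isHermitian D ξ).eigenvalues₀_antitone (Nat.zero_le _)

end Spectrum

section Variational

variable {B C D : Finset (Site d)} {ξ ξ' ψ : Site d → ℝ} {lam : ℝ}

theorem hamApply_eq_add_sdiff (hBC : B ⊆ C) (f : Site d → ℝ) (x : Site d) :
    hamApply C ξ f x =
      hamApply B ξ f x + ∑ y ∈ (C \ B).filter (fun y => dist1 x y = 1), f y := by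
  simp only [hamApply, Finset.sum_filter, ← Finset.sum_sdiff hBC]
  ring

theorem hamApply_sub_hamApply (f : Site d → ℝ) (x : Site d) :
    hamApply D ξ' f x - hamApply D ξ f x = (ξ' x - ξ x) * f x := by
  simp only [hamApply]
  ring

theorem quadForm_eq_of_subset (hBD : B ⊆ D) {f : Site d → ℝ} (hf : ∀ x ∉ B, f x = 0) :
    quadForm D ξ f = quadForm B ξ f := by
  rw [quadForm, quadForm, ← Finset.sum_subset hBD fun x _ hx => by rw [hf x hx, zero_mul]]
  refine Finset.sum_congr rfl fun x _ => ?_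
  rw [hamApply_eq_add_sdiff hBD, Finset.sum_eq_zero fun y hy =>
    hf y (Finset.mem_sdiff.1 (Finset.mem_filter.1 hy).1).2, add_zero]

namespace IsEigen

theorem exists_ne_zero_s6 (h : IsEigen D ξ lam ψ) : ∃ x ∈ D, ψ x ≠ 0 := by
  by_contra! h0
  exact h.2.1 <| funext fun x => if hx : x ∈ D then h0 x hx else h.1 x hx

theorem sum_sq_pos (h : IsEigen D ξ lam ψ) : 0 < ∑ x ∈ D, ψ x ^ 2 :=
  let ⟨x, hx, hψx⟩ := h.exists_ne_zero_s6
  Finset.sum_pos' (fun _ _ => sq_nonneg _) ⟨x, hx, by positivity⟩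

theorem quadForm_eq (h : IsEigen D ξ lam ψ) : quadForm D ξ ψ = lam * ∑ x ∈ D, ψ x ^ 2 := by
  rw [quadForm, Finset.mul_sum]
  exact Finset.sum_congr rfl fun x hx => by rw [h.2.2 x hx]; ring

/-- Cutting the bonds between `B` and `C \ B` removes only terms `ψ x * ψ y ≤ 0`, so the
quadratic form of `ψ` on `B` is still at least `lam * ∑ x ∈ B, ψ x ^ 2`. -/
theorem le_lambdaK_one_of_subset (h : IsEigen C ξ lam ψ) (hBC : B ⊆ C)
    (hcross : ∀ x ∈ B, ∀ y ∈ C \ B, dist1 x y = 1 → ψ x * ψ y ≤ 0)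
    (hne : ∃ x ∈ B, ψ x ≠ 0) : lam ≤ lambdaK B ξ 1 := by
  obtain ⟨x₀, hx₀, hψx₀⟩ := hne
  have hcut : ∑ x ∈ B, ψ x * ∑ y ∈ (C \ B).filter (fun y => dist1 x y = 1), ψ y ≤ 0 :=
    Finset.sum_nonpos fun x hx => by
      rw [Finset.mul_sum]
      exact Finset.sum_nonpos fun y hy =>
        hcross x hx y (Finset.mem_filter.1 hy).1 (Finset.mem_filter.1 hy).2
  have hquad : lam * ∑ x ∈ B, ψ x ^ 2 ≤ quadForm B ξ ψ := by
    calc lam * ∑ x ∈ B, ψ x ^ 2 = ∑ x ∈ B, ψ x * hamApply C ξ ψ x := by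
          rw [Finset.mul_sum]
          exact Finset.sum_congr rfl fun x hx => by rw [h.2.2 x (hBC hx)]; ring
      _ = quadForm B ξ ψ +
            ∑ x ∈ B, ψ x * ∑ y ∈ (C \ B).filter (fun y => dist1 x y = 1), ψ y := by
          rw [quadForm, ← Finset.sum_add_distrib]
          exact Finset.sum_congr rfl fun x _ => by rw [hamApply_eq_add_sdiff hBC]; ring
      _ ≤ quadForm B ξ ψ := by linarith
  have hpos : 0 < ∑ x ∈ B, ψ x ^ 2 :=
    Finset.sum_pos' (fun _ _ => sq_nonneg _) ⟨x₀, hx₀, by positivity⟩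
  exact le_of_mul_le_mul_right (hquad.trans (quadForm_le_lambdaK_one ⟨x₀, hx₀⟩ ψ)) hpos

end IsEigen

theorem lambdaK_one_mono (hB : B.Nonempty) (hBD : B ⊆ D) :
    lambdaK B ξ 1 ≤ lambdaK D ξ 1 := by
  obtain ⟨ψ, hψ⟩ := exists_isEigen_lambdaK_one (ξ := ξ) hB
  have hbound := quadForm_le_lambdaK_one (hB.mono hBD) ψ (ξ := ξ)
  rw [quadForm_eq_of_subset hBD hψ.1, hψ.quadForm_eq,
    ← Finset.sum_subset hBD fun x _ hx => by rw [hψ.1 x hx, sq, zero_mul]] at hbound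
  exact le_of_mul_le_mul_right hbound hψ.sum_sq_pos

theorem lambdaK_one_add_le (hD : D.Nonempty) {c : ℝ} (h : ∀ x ∈ D, ξ x + c ≤ ξ' x) :
    lambdaK D ξ 1 + c ≤ lambdaK D ξ' 1 := by
  obtain ⟨ψ, hψ⟩ := exists_isEigen_lambdaK_one (ξ := ξ) hD
  have hshift : quadForm D ξ ψ + c * ∑ x ∈ D, ψ x ^ 2 ≤ quadForm D ξ' ψ := by
    rw [quadForm, quadForm, Finset.mul_sum, ← Finset.sum_add_distrib]
    refine Finset.sum_le_sum fun x hx => ?_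
    have hdiff : ψ x * hamApply D ξ' ψ x - ψ x * hamApply D ξ ψ x = (ξ' x - ξ x) * ψ x ^ 2 := by
      rw [← mul_sub, hamApply_sub_hamApply]
      ring
    have hpot : c * ψ x ^ 2 ≤ (ξ' x - ξ x) * ψ x ^ 2 :=
      mul_le_mul_of_nonneg_right (by linarith [h x hx]) (sq_nonneg _)
    linarith
  rw [hψ.quadForm_eq] at hshift
  exact le_of_mul_le_mul_right (by linarith [quadForm_le_lambdaK_one hD ψ (ξ := ξ')])
    hψ.sum_sq_pos

end Variational

theorem eq_zero_of_sum_eq_zero_of_mul_nonneg {ι R : Type*} [CommRing R] [LinearOrder R]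
    [IsStrictOrderedRing R] {s : Finset ι} {f : ι → R}
    (hf : ∀ x ∈ s, ∀ y ∈ s, 0 ≤ f x * f y) (hsum : ∑ x ∈ s, f x = 0) {x : ι} (hx : x ∈ s) :
    f x = 0 := by
  have hle : f x * f x ≤ ∑ y ∈ s, f x * f y := Finset.single_le_sum (hf x hx) hx
  rw [← Finset.mul_sum, hsum, mul_zero] at hle
  exact mul_self_eq_zero.mp (le_antisymm hle (mul_self_nonneg _))

section NodalSplit

variable {C : Finset (Site d)} {ξ ψ : Site d → ℝ} {lam : ℝ}

theorem IsEigen.exists_split_of_mul_neg (h : IsEigen C ξ lam ψ) {x y : Site d} (hx : x ∈ C)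
    (hy : y ∈ C) (hxy : ψ x * ψ y < 0) :
    ∃ B ⊆ C, B.Nonempty ∧ (C \ B).Nonempty ∧ lam ≤ lambdaK B ξ 1 ∧ lam ≤ lambdaK (C \ B) ξ 1 := by
  wlog hψx : 0 < ψ x generalizing x y
  · exact this hy hx (by rwa [mul_comm]) (pos_of_mul_neg_right hxy (not_lt.mp hψx))
  have hψy : ψ y < 0 := neg_of_mul_neg_right hxy hψx.le
  set B := C.filter (0 ≤ ψ ·)
  have hBC : B ⊆ C := Finset.filter_subset _ _
  have hxB : x ∈ B := Finset.mem_filter.2 ⟨hx, hψx.le⟩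
  have hyB : y ∈ C \ B := by simp [B, hy, hψy]
  refine ⟨B, hBC, ⟨x, hxB⟩, ⟨y, hyB⟩,
    h.le_lambdaK_one_of_subset hBC ?_ ⟨x, hxB, hψx.ne'⟩,
    h.le_lambdaK_one_of_subset Finset.sdiff_subset ?_ ⟨y, hyB, hψy.ne⟩⟩
  · intro u hu v hv _
    simp only [B, Finset.mem_sdiff, Finset.mem_filter, not_and, not_le] at hu hv
    exact mul_nonpos_of_nonneg_of_nonpos hu.2 (hv.2 hv.1).le
  · rw [Finset.sdiff_sdiff_eq_self hBC]
    intro u hu v hv _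
    simp only [B, Finset.mem_sdiff, Finset.mem_filter, not_and, not_le] at hu hv
    exact mul_nonpos_of_nonpos_of_nonneg (hu.2 hu.1).le hv.2

theorem exists_nodal_split (ξ : Site d → ℝ) (hC : 2 ≤ C.card) :
    ∃ B ⊆ C, B.Nonempty ∧ (C \ B).Nonempty ∧
      lambdaK C ξ 2 ≤ lambdaK B ξ 1 ∧ lambdaK C ξ 2 ≤ lambdaK (C \ B) ξ 1 := by
  obtain ⟨ψ, φ, hψ, hφ, horth⟩ := exists_isEigen_pair (ξ := ξ) hC
  have h21 := lambdaK_two_le_one (ξ := ξ) hC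
  by_cases hψs : ∃ x ∈ C, ∃ y ∈ C, ψ x * ψ y < 0
  · obtain ⟨x, hx, y, hy, hxy⟩ := hψs
    exact hψ.exists_split_of_mul_neg hx hy hxy
  by_cases hφs : ∃ x ∈ C, ∃ y ∈ C, φ x * φ y < 0
  · obtain ⟨x, hx, y, hy, hxy⟩ := hφs
    obtain ⟨B, hBC, hB, hCB, h₁B, h₁CB⟩ := hφ.exists_split_of_mul_neg hx hy hxy
    exact ⟨B, hBC, hB, hCB, h21.trans h₁B, h21.trans h₁CB⟩
  push Not at hψs hφs
  -- Orthogonal eigenfunctions that both keep their sign have disjoint supports.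
  have hdisj : ∀ x ∈ C, ψ x * φ x = 0 := fun x hx =>
    eq_zero_of_sum_eq_zero_of_mul_nonneg (fun u hu v hv => by
      calc 0 ≤ (ψ u * ψ v) * (φ u * φ v) := mul_nonneg (hψs u hu v hv) (hφs u hu v hv)
        _ = ψ u * φ u * (ψ v * φ v) := by ring) horth hx
  set B := C.filter (φ · = 0)
  have hBC : B ⊆ C := Finset.filter_subset _ _
  obtain ⟨x, hx, hψx⟩ := hψ.exists_ne_zero_s6
  obtain ⟨y, hy, hφy⟩ := hφ.exists_ne_zero_s6
  have hxB : x ∈ B := Finset.mem_filter.2 ⟨hx, (mul_eq_zero.1 (hdisj x hx)).resolve_left hψx⟩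
  have hyB : y ∈ C \ B := by simp [B, hy, hφy]
  refine ⟨B, hBC, ⟨x, hxB⟩, ⟨y, hyB⟩,
    hψ.le_lambdaK_one_of_subset hBC ?_ ⟨x, hxB, hψx⟩,
    h21.trans (hφ.le_lambdaK_one_of_subset Finset.sdiff_subset ?_ ⟨y, hyB, hφy⟩)⟩
  · intro u _ v hv _
    simp only [B, Finset.mem_sdiff, Finset.mem_filter, not_and] at hv
    simp [(mul_eq_zero.1 (hdisj v hv.1)).resolve_right (hv.2 hv.1)]
  · rw [Finset.sdiff_sdiff_eq_self hBC]
    intro u _ v hv _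
    simp [(Finset.mem_filter.1 hv).2]

end NodalSplit

section Mass

variable {ρ : ℝ} {B C D : Finset (Site d)} {φ : Site d → ℝ}

theorem LC_add_const (ρ c : ℝ) (D : Finset (Site d)) (φ : Site d → ℝ) :
    LC ρ D (fun x => φ x + c) = Real.exp (c / ρ) * LC ρ D φ := by
  simp only [LC, Finset.mul_sum, add_div, Real.exp_add, mul_comm]

theorem LC_pos (hD : D.Nonempty) : 0 < LC ρ D φ :=
  Finset.sum_pos (fun _ _ => Real.exp_pos _) hD

theorem LC_sdiff_add (hBC : B ⊆ C) : LC ρ (C \ B) φ + LC ρ B φ = LC ρ C φ :=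
  Finset.sum_sdiff hBC

theorem LC_sub_log_LC (hρ : ρ ≠ 0) (hD : D.Nonempty) :
    LC ρ D (fun x => φ x - ρ * Real.log (LC ρ D φ)) = 1 := by
  simp only [sub_eq_add_neg, LC_add_const, neg_div, mul_div_cancel_left₀ _ hρ, Real.exp_neg,
    Real.exp_log (LC_pos hD), inv_mul_cancel₀ (LC_pos hD).ne']

theorem nonpos_of_LC_le_one (hρ : 0 < ρ) {x : Site d} (hx : x ∈ D) (h : LC ρ D φ ≤ 1) :
    φ x ≤ 0 := by
  have hexp : Real.exp (φ x / ρ) ≤ 1 :=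
    (Finset.single_le_sum (fun y _ => (Real.exp_pos (φ y / ρ)).le) hx).trans h
  by_contra! hpos
  linarith [Real.exp_le_one_iff.1 hexp, div_pos hpos hρ]

theorem exists_LC_le_one_of_subset (hρ : 0 < ρ) (hBC : B ⊆ C) (hφ : LC ρ B φ ≤ 1) {ε : ℝ}
    (hε : 0 < ε) : ∃ φ' : Site d → ℝ, LC ρ C φ' ≤ 1 ∧ ∀ x ∈ B, φ' x = φ x - ε := by
  set δ := 1 - Real.exp (-ε / ρ)
  have hδ : 0 < δ :=
    sub_pos.2 (Real.exp_lt_one_iff.2 (div_neg_of_neg_of_pos (neg_neg_of_pos hε) hρ))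
  -- `+ 1` keeps the denominator positive when `C` is empty.
  set t := ρ * Real.log (δ / (C.card + 1))
  refine ⟨fun x => if x ∈ B then φ x - ε else t, ?_, fun x hx => if_pos hx⟩
  have hmassB : LC ρ B (fun x => if x ∈ B then φ x - ε else t) = Real.exp (-ε / ρ) * LC ρ B φ := by
    rw [← LC_add_const]
    exact Finset.sum_congr rfl fun x hx => by simp [hx, sub_eq_add_neg]
  have hmassCB : LC ρ (C \ B) (fun x => if x ∈ B then φ x - ε else t) ≤ δ := by
    have hterm : ∀ x ∈ C \ B,
        Real.exp ((if x ∈ B then φ x - ε else t) / ρ) = δ / (C.card + 1) := fun x hx => by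
      rw [if_neg (Finset.mem_sdiff.1 hx).2, mul_div_cancel_left₀ _ hρ.ne',
        Real.exp_log (by positivity)]
    rw [LC, Finset.sum_congr rfl hterm, Finset.sum_const, nsmul_eq_mul, mul_div_assoc',
      div_le_iff₀ (by positivity)]
    have hcard : ((C \ B).card : ℝ) ≤ C.card + 1 := by
      exact_mod_cast (Finset.card_le_card Finset.sdiff_subset).trans (Nat.le_succ _)
    nlinarith
  have hdecay := mul_le_of_le_one_right (Real.exp_pos (-ε / ρ)).le hφ
  rw [← LC_sdiff_add hBC]
  linarith

end Mass

section Chi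

variable {ρ : ℝ} {B C D : Finset (Site d)}

theorem bddAbove_lambdaK_one_image (hρ : 0 < ρ) (hD : D.Nonempty) :
    BddAbove ((fun φ : Site d → ℝ => lambdaK D φ 1) '' {φ : Site d → ℝ | LC ρ D φ ≤ 1}) := by
  refine ⟨lambdaK D 0 1, ?_⟩
  rintro _ ⟨φ, hφ, rfl⟩
  simpa using lambdaK_one_add_le hD (c := 0) fun x hx => by
    simpa using nonpos_of_LC_le_one hρ hx hφ

theorem lambdaK_one_sub_log_LC_le_neg_chi (hρ : 0 < ρ) (hD : D.Nonempty) (ξ : Site d → ℝ) :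
    lambdaK D ξ 1 - ρ * Real.log (LC ρ D ξ) ≤ -chi ρ D := by
  rw [chi, neg_neg, sub_eq_add_neg]
  refine (lambdaK_one_add_le hD fun x _ => le_rfl).trans
    (le_csSup (bddAbove_lambdaK_one_image hρ hD) ⟨_, ?_, rfl⟩)
  simpa [← sub_eq_add_neg] using (LC_sub_log_LC hρ.ne' hD (φ := ξ)).le

theorem chi_le_chi_of_subset (hρ : 0 < ρ) (hB : B.Nonempty) (hBC : B ⊆ C) :
    chi ρ C ≤ chi ρ B := by
  rw [chi, chi, neg_le_neg_iff]
  refine csSup_le ⟨_, _, (LC_sub_log_LC hρ.ne' hB (φ := fun _ => 0)).le, rfl⟩ ?_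
  rintro _ ⟨φ, hφ, rfl⟩
  refine le_of_forall_pos_le_add fun ε hε => ?_
  obtain ⟨φ', hφ'C, hφ'B⟩ := exists_LC_le_one_of_subset hρ hBC hφ hε
  have hshift := lambdaK_one_add_le hB (c := -ε) fun x hx => (hφ'B x hx).ge
  calc lambdaK B φ 1 ≤ lambdaK B φ' 1 + ε := by linarith
    _ ≤ lambdaK C φ' 1 + ε := by gcongr; exact lambdaK_one_mono hB hBC
    _ ≤ _ := by
      gcongr
      exact le_csSup (bddAbove_lambdaK_one_image hρ (hB.mono hBC)) ⟨φ', hφ'C, rfl⟩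

end Chi

theorem spectral_gap_general {d : ℕ} (ρ : ℝ) (hρ : 0 < ρ)
    (C : Finset (Site d)) (hC : 2 ≤ C.card) (ξ : Site d → ℝ)
    (K : ℝ) (hgap : lambdaK C ξ 1 - lambdaK C ξ 2 ≤ K) :
    lambdaK C ξ 1 - ρ * Real.log (LC ρ C ξ) ≤ -chi ρ C + K - ρ * Real.log 2 := by
  obtain ⟨B, hBC, hB, hCB, h₂B, h₂CB⟩ := exists_nodal_split ξ hC
  obtain ⟨B₀, hB₀C, hB₀, h₂B₀, hhalf⟩ : ∃ B₀ ⊆ C, B₀.Nonempty ∧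
      lambdaK C ξ 2 ≤ lambdaK B₀ ξ 1 ∧ 2 * LC ρ B₀ ξ ≤ LC ρ C ξ := by
    have hsplit := LC_sdiff_add (ρ := ρ) (φ := ξ) hBC
    rcases le_total (LC ρ B ξ) (LC ρ (C \ B) ξ) with h | h
    · exact ⟨B, hBC, hB, h₂B, by linarith⟩
    · exact ⟨C \ B, Finset.sdiff_subset, hCB, h₂CB, by linarith⟩
  have hlog : ρ * Real.log 2 + ρ * Real.log (LC ρ B₀ ξ) ≤ ρ * Real.log (LC ρ C ξ) := by
    rw [← mul_add, ← Real.log_mul two_ne_zero (LC_pos hB₀).ne']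
    exact mul_le_mul_of_nonneg_left
      (Real.log_le_log (mul_pos two_pos (LC_pos hB₀)) hhalf) hρ.le
  linarith [lambdaK_one_sub_log_LC_le_neg_chi hρ hB₀ ξ, chi_le_chi_of_subset hρ hB₀ hB₀C]

/-- Proposition 2.2, spectral gap: if the gap between the two top
Dirichlet eigenvalues on `C` is at most `K`, then
`λ_C^{(1)}(ξ) - ρ log L_C(ξ) ≤ -χ_C + K - ρ log 2`. -/
theorem spectral_gap {d : ℕ} (hd : 0 < d) (ρ : ℝ) (hρ : 0 < ρ)
    (C : Finset (Site d)) (hC : 2 ≤ C.card) (ξ : Site d → ℝ)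
    (K : ℝ) (hK : 0 ≤ K) (hgap : lambdaK C ξ 1 - lambdaK C ξ 2 ≤ K) :
    lambdaK C ξ 1 - ρ * Real.log (LC ρ C ξ) ≤ -chi ρ C + K - ρ * Real.log 2 :=
  spectral_gap_general ρ hρ C hC ξ K hgap

end RSO
end

section
/- Let ξ(0) be a real random variable with esssup ξ(0) = ∞ such that F(r) := log log(P(ξ(0) > r)^{-1}) is continuously differentiable with F'(r) → 1/ρ ∈ (0,∞) as r → ∞. Then the law of ξ(0) has a probability density f(r) = F'(r)·P(ξ(0)>r)·(-log P(ξ(0)>r)) for large r, and f(r + s e^{-F(r)}) / f(r) → e^{-s/ρ} as r → ∞, locally uniformly in s ∈ R. -/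
/-!
Write `p(r) = P(ξ(0) > r)`. For `r > r₀` we have `p = exp (-exp F)`, so `-p' = F' e^F e^{-e^F} = f`
and the first claim is the fundamental theorem of calculus.

For the ratio put `r' = r + s e^{-F r}` and `Δ = F r' - F r`. Since `F' → c := 1/ρ > 0`, `F → ∞`
and the mean value inequality applied to `F - c·id` gives `e^{F r} Δ - c s → 0`, uniformly for
`s` in a bounded set; hence `Δ → 0` and, by `|e^Δ - 1 - Δ| ≤ Δ²`,
`e^{F r'} - e^{F r} = e^{F r}(e^Δ - 1)` is also `c s + o(1)`. Finally
`f r' / f r = (F' r' / F' r) · exp (Δ - (e^{F r'} - e^{F r}))` and `F' r' / F' r → 1`.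
Uniform convergence on `K` is handled as convergence along `atTop ×ˢ 𝓟 K`.
-/

open Filter Topology Set Real MeasureTheory Bornology

lemma tendstoUniformlyOn_of_tendsto_sub {ι α E : Type*} [SeminormedAddCommGroup E] {p : Filter ι}
    {K : Set α} {G : ι → α → E} {g : α → E}
    (h : Tendsto (fun q : ι × α => G q.1 q.2 - g q.2) (p ×ˢ 𝓟 K) (𝓝 0)) :
    TendstoUniformlyOn G g p K := by
  rw [tendstoUniformlyOn_iff_tendsto, Metric.uniformity_eq_comap_nhds_zero, tendsto_comap_iff]
  simpa only [Function.comp_def, dist_eq_norm, norm_sub_rev] using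
    tendsto_zero_iff_norm_tendsto_zero.1 h

lemma isBoundedUnder_norm_comp_snd {ι α E : Type*} [PseudoMetricSpace α] [ProperSpace α]
    [SeminormedAddGroup E] {l : Filter ι} {K : Set α} {g : α → E} (hg : Continuous g)
    (hK : IsBounded K) : IsBoundedUnder (· ≤ ·) (l ×ˢ 𝓟 K) (fun q : ι × α => ‖g q.2‖) := by
  obtain ⟨C, hC⟩ := hK.isCompact_closure.exists_bound_of_continuousOn hg.continuousOn
  exact isBoundedUnder_of_eventually_le
    ((tendsto_principal.1 tendsto_snd).mono fun q hq => hC _ (subset_closure hq))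

lemma exp_log_log_inv {p : ℝ} (hp₀ : 0 < p) (hp₁ : p < 1) : exp (log (log p⁻¹)) = -log p := by
  rw [log_inv, exp_log (neg_pos.2 (log_neg hp₀ hp₁))]

lemma exp_neg_exp_log_log_inv {p : ℝ} (hp₀ : 0 < p) (hp₁ : p < 1) :
    exp (-exp (log (log p⁻¹))) = p := by
  rw [exp_log_log_inv hp₀ hp₁, neg_neg, exp_log hp₀]

lemma measureReal_Ioc_eq_integral_of_hasDerivAt {μ : Measure ℝ} [IsFiniteMeasure μ] {φ : ℝ → ℝ}
    {a b : ℝ} (hab : a ≤ b) (hderiv : ∀ x ∈ Icc a b, HasDerivAt (fun r => μ.real (Ioi r)) (-φ x) x)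
    (hcont : ContinuousOn φ (Icc a b)) :
    μ.real (Ioc a b) = ∫ r in a..b, φ r := by
  have hneg : ∀ x ∈ uIcc a b, HasDerivAt (fun r => -μ.real (Ioi r)) (φ x) x := fun x hx => by
    have := (hderiv x (uIcc_of_le hab ▸ hx)).neg
    rwa [neg_neg] at this
  rw [← Ioi_sdiff_Ioi, measureReal_sdiff (Ioi_subset_Ioi hab) measurableSet_Ioi,
    intervalIntegral.integral_eq_sub_of_hasDerivAt hneg (hcont.intervalIntegrable_of_Icc hab)]
  ring

section LogLogTail

variable {F F' : ℝ → ℝ} {r₀ c : ℝ}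

lemma hasDerivAt_exp_neg_exp {x : ℝ} (hF : HasDerivAt F (F' x) x) :
    HasDerivAt (fun r => exp (-exp (F r))) (-(F' x * exp (F x - exp (F x)))) x := by
  convert hF.exp.neg.exp using 1
  · rfl
  · rw [sub_eq_add_neg, exp_add]
    simp only [Pi.neg_apply]
    ring

lemma measureReal_Ioc_eq_integral_of_tail_eq {μ : Measure ℝ} [IsFiniteMeasure μ]
    (htail : ∀ r, r₀ < r → μ.real (Ioi r) = exp (-exp (F r)))
    (hderiv : ∀ x, r₀ < x → HasDerivAt F (F' x) x) (hcont : ContinuousOn F' (Ioi r₀))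
    {a b : ℝ} (ha : r₀ < a) (hab : a ≤ b) :
    μ.real (Ioc a b) = ∫ r in a..b, F' r * exp (F r - exp (F r)) := by
  have hIcc : Icc a b ⊆ Ioi r₀ := fun x hx => ha.trans_le hx.1
  refine measureReal_Ioc_eq_integral_of_hasDerivAt hab (fun x hx => ?_) ?_
  · have hx : r₀ < x := hIcc hx
    refine (hasDerivAt_exp_neg_exp (hderiv x hx)).congr_of_eventuallyEq ?_
    filter_upwards [Ioi_mem_nhds hx] with r hr using htail r hr
  · have hFc : ContinuousOn F (Ioi r₀) := fun x hx =>
      (hderiv x hx).continuousAt.continuousWithinAt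
    exact (hcont.mul (hFc.sub hFc.rexp).rexp).mono hIcc

lemma exists_abs_sub_sub_mul_le_of_tendsto_deriv (hderiv : ∀ x, r₀ < x → HasDerivAt F (F' x) x)
    (hlim : Tendsto F' atTop (𝓝 c)) {ε : ℝ} (hε : 0 < ε) :
    ∃ R, ∀ x ≥ R, ∀ y ≥ R, |F y - F x - c * (y - x)| ≤ ε * |y - x| := by
  obtain ⟨R, hR⟩ := eventually_atTop.1
    ((hlim.eventually (Metric.closedBall_mem_nhds c hε)).and (eventually_gt_atTop r₀))
  refine ⟨R, fun x hx y hy => ?_⟩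
  have hdiff : ∀ t ∈ Ici R, HasDerivWithinAt (fun t => F t - c * t) (F' t - c * 1) (Ici R) t :=
    fun t ht => ((hderiv t (hR t ht).2).sub ((hasDerivAt_id' t).const_mul c)).hasDerivWithinAt
  have hbound : ∀ t ∈ Ici R, ‖F' t - c * 1‖ ≤ ε := fun t ht => by
    simpa [← dist_eq_norm] using (hR t ht).1
  have := (convex_Ici R).norm_image_sub_le_of_norm_hasDerivWithin_le hdiff hbound hx hy
  rw [norm_eq_abs, norm_eq_abs] at this
  convert this using 2
  ring

lemma tendsto_atTop_of_tendsto_deriv (hderiv : ∀ x, r₀ < x → HasDerivAt F (F' x) x)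
    (hc : 0 < c) (hlim : Tendsto F' atTop (𝓝 c)) : Tendsto F atTop atTop := by
  obtain ⟨R, hR⟩ := exists_abs_sub_sub_mul_le_of_tendsto_deriv hderiv hlim (half_pos hc)
  have hlin : Tendsto (fun y => F R + c / 2 * (y + -R)) atTop atTop :=
    tendsto_atTop_add_const_left _ _
      ((tendsto_atTop_add_const_right _ (-R) tendsto_id).const_mul_atTop (half_pos hc))
  refine tendsto_atTop_mono' _ ?_ hlin
  filter_upwards [eventually_ge_atTop R] with y hy
  have := (abs_le.1 (hR R le_rfl y hy)).1
  rw [abs_of_nonneg (sub_nonneg.2 hy)] at this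
  linarith


lemma tendsto_exp_neg_of_tendsto_atTop (hF : Tendsto F atTop atTop) :
    Tendsto (fun r => exp (-F r)) atTop (𝓝 0) :=
  tendsto_exp_atBot.comp (tendsto_neg_atTop_atBot.comp hF)

variable {K : Set ℝ}

lemma tendsto_snd_mul_exp_neg (hF : Tendsto F atTop atTop) (hK : IsBounded K) :
    Tendsto (fun q : ℝ × ℝ => q.2 * exp (-F q.1)) (atTop ×ˢ 𝓟 K) (𝓝 0) := by
  simpa only [mul_comm, Function.comp_apply, id] using
    ((tendsto_exp_neg_of_tendsto_atTop hF).comp tendsto_fst).zero_mul_isBoundedUnder_le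
      (isBoundedUnder_norm_comp_snd continuous_id hK)

lemma tendsto_add_snd_mul_exp_neg_atTop (hF : Tendsto F atTop atTop) (hK : IsBounded K) :
    Tendsto (fun q : ℝ × ℝ => q.1 + q.2 * exp (-F q.1)) (atTop ×ˢ 𝓟 K) atTop :=
  tendsto_fst.atTop_add (tendsto_snd_mul_exp_neg hF hK)

lemma tendsto_exp_mul_increment_sub (hderiv : ∀ x, r₀ < x → HasDerivAt F (F' x) x)
    (hlim : Tendsto F' atTop (𝓝 c)) (hF : Tendsto F atTop atTop) (hK : IsBounded K) :
    Tendsto (fun q : ℝ × ℝ => exp (F q.1) * (F (q.1 + q.2 * exp (-F q.1)) - F q.1) - c * q.2)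
      (atTop ×ˢ 𝓟 K) (𝓝 0) := by
  obtain ⟨M, hM⟩ := hK.exists_norm_le
  rw [Metric.tendsto_nhds]
  intro ε hε
  obtain ⟨R, hR⟩ := exists_abs_sub_sub_mul_le_of_tendsto_deriv hderiv hlim
    (ε := ε / (|M| + 1)) (by positivity)
  filter_upwards [tendsto_fst.eventually (eventually_ge_atTop R),
    (tendsto_add_snd_mul_exp_neg_atTop hF hK).eventually (eventually_ge_atTop R),
    tendsto_principal.1 tendsto_snd] with ⟨r, s⟩ hr hr' hs
  have hEe : exp (F r) * exp (-F r) = 1 := by rw [← exp_add, add_neg_cancel, exp_zero]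
  have hincr := hR r hr _ hr'
  rw [add_sub_cancel_left, abs_mul, abs_of_pos (exp_pos _)] at hincr
  have hsM : |s| ≤ |M| := (hM s hs).trans (le_abs_self M)
  calc dist (exp (F r) * (F (r + s * exp (-F r)) - F r) - c * s) 0
      = exp (F r) * |F (r + s * exp (-F r)) - F r - c * (s * exp (-F r))| := by
        rw [dist_zero_right, norm_eq_abs, ← abs_of_pos (exp_pos (F r)), ← abs_mul,
          abs_of_pos (exp_pos (F r))]
        congr 1
        linear_combination (c * s) * hEe
    _ ≤ exp (F r) * (ε / (|M| + 1) * (|s| * exp (-F r))) := by gcongr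
    _ = ε / (|M| + 1) * |s| := by linear_combination (ε / (|M| + 1) * |s|) * hEe
    _ < ε := by
        rw [div_mul_eq_mul_div, div_lt_iff₀ (by positivity)]
        nlinarith

lemma tendsto_increment (hderiv : ∀ x, r₀ < x → HasDerivAt F (F' x) x)
    (hlim : Tendsto F' atTop (𝓝 c)) (hF : Tendsto F atTop atTop) (hK : IsBounded K) :
    Tendsto (fun q : ℝ × ℝ => F (q.1 + q.2 * exp (-F q.1)) - F q.1) (atTop ×ˢ 𝓟 K) (𝓝 0) := by
  have := (((tendsto_exp_neg_of_tendsto_atTop hF).comp tendsto_fst).mul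
    (tendsto_exp_mul_increment_sub hderiv hlim hF hK)).add
    ((tendsto_snd_mul_exp_neg hF hK).const_mul c)
  rw [mul_zero, mul_zero, add_zero] at this
  refine this.congr fun q => ?_
  have hEe : exp (-F q.1) * exp (F q.1) = 1 := by rw [← exp_add, neg_add_cancel, exp_zero]
  simp only [Function.comp_apply]
  linear_combination (F (q.1 + q.2 * exp (-F q.1)) - F q.1) * hEe


lemma tendsto_exp_increment_sub (hderiv : ∀ x, r₀ < x → HasDerivAt F (F' x) x)
    (hlim : Tendsto F' atTop (𝓝 c)) (hF : Tendsto F atTop atTop) (hK : IsBounded K) :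
    Tendsto (fun q : ℝ × ℝ => exp (F (q.1 + q.2 * exp (-F q.1))) - exp (F q.1) - c * q.2)
      (atTop ×ˢ 𝓟 K) (𝓝 0) := by
  set Δ : ℝ × ℝ → ℝ := fun q => F (q.1 + q.2 * exp (-F q.1)) - F q.1 with hΔdef
  have hΔ : Tendsto Δ (atTop ×ˢ 𝓟 K) (𝓝 0) := tendsto_increment hderiv hlim hF hK
  have hEΔ := tendsto_exp_mul_increment_sub hderiv hlim hF hK
  have hΔs : Tendsto (fun q : ℝ × ℝ => Δ q * q.2) (atTop ×ˢ 𝓟 K) (𝓝 0) := by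
    simpa only [Function.comp_apply, id] using
      hΔ.zero_mul_isBoundedUnder_le (isBoundedUnder_norm_comp_snd continuous_id hK)
  have hEΔ2 : Tendsto (fun q : ℝ × ℝ => exp (F q.1) * Δ q ^ 2) (atTop ×ˢ 𝓟 K) (𝓝 0) := by
    have := (hEΔ.mul hΔ).add (hΔs.const_mul c)
    rw [zero_mul, mul_zero, add_zero] at this
    exact this.congr fun q => by ring
  have hrem : Tendsto (fun q : ℝ × ℝ => exp (F q.1) * (exp (Δ q) - 1 - Δ q))
      (atTop ×ˢ 𝓟 K) (𝓝 0) := by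
    refine squeeze_zero_norm' ?_ hEΔ2
    filter_upwards [hΔ.eventually (Metric.closedBall_mem_nhds 0 one_pos)] with q hq
    rw [dist_zero_right, norm_eq_abs] at hq
    rw [norm_mul, norm_of_nonneg (exp_pos _).le, norm_eq_abs]
    gcongr
    exact abs_exp_sub_one_sub_id_le hq
  have := hrem.add hEΔ
  rw [add_zero] at this
  refine this.congr fun q => ?_
  have hexp : exp (F q.1) * exp (Δ q) = exp (F (q.1 + q.2 * exp (-F q.1))) := by
    rw [← exp_add, hΔdef, add_sub_cancel]
  linear_combination hexp

lemma tendstoUniformlyOn_density_ratio {f : ℝ → ℝ}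
    (hderiv : ∀ x, r₀ < x → HasDerivAt F (F' x) x) (hc : 0 < c) (hlim : Tendsto F' atTop (𝓝 c))
    (hf : ∀ᶠ x in atTop, f x = F' x * exp (F x - exp (F x))) (hK : IsBounded K) :
    TendstoUniformlyOn (fun r s => f (r + s * exp (-F r)) / f r) (fun s => exp (-(c * s)))
      atTop K := by
  have hF := tendsto_atTop_of_tendsto_deriv hderiv hc hlim
  have hshift := tendsto_add_snd_mul_exp_neg_atTop hF hK
  set r' : ℝ × ℝ → ℝ := fun q => q.1 + q.2 * exp (-F q.1)
  have hslope : Tendsto (fun q => F' (r' q) / F' q.1) (atTop ×ˢ 𝓟 K) (𝓝 1) := by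
    have := (hlim.comp hshift).div (hlim.comp tendsto_fst) hc.ne'
    rwa [div_self hc.ne'] at this
  have hexp : Tendsto (fun q => exp ((F (r' q) - F q.1) - (exp (F (r' q)) - exp (F q.1) - c * q.2)))
      (atTop ×ˢ 𝓟 K) (𝓝 1) := by
    simpa only [sub_zero, exp_zero] using
      ((tendsto_increment hderiv hlim hF hK).sub (tendsto_exp_increment_sub hderiv hlim hF hK)).rexp
  have hmain := (by simpa only [mul_one, sub_self] using (hslope.mul hexp).sub_const 1 :
    Tendsto (fun q => F' (r' q) / F' q.1 *
      exp ((F (r' q) - F q.1) - (exp (F (r' q)) - exp (F q.1) - c * q.2)) - 1) _ (𝓝 0))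
  have := hmain.zero_mul_isBoundedUnder_le
    (isBoundedUnder_norm_comp_snd (g := fun s => exp (-(c * s))) (by fun_prop) hK)
  apply tendstoUniformlyOn_of_tendsto_sub
  refine this.congr' ?_
  filter_upwards [tendsto_fst.eventually hf, hshift.eventually hf] with q hfr hfr'
  change _ = f (r' q) / f q.1 - _
  rw [hfr, hfr', mul_div_mul_comm, ← exp_sub, sub_mul, one_mul, mul_assoc, ← exp_add]
  ring_nf

end LogLogTail

/-- Lemma 4.1(2): if `μ` is the law of a random variable with
`esssup = ∞` such that `F(r) := log log (P(ξ>r)⁻¹)` is continuously differentiable with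
`F'(r) → 1/ρ`, then the law has the density
`f(r) = F'(r)·P(ξ>r)·(-log P(ξ>r))` for large `r`, and
`f(r + s e^{-F(r)})/f(r) → e^{-s/ρ}` locally uniformly in `s`. -/
theorem density_and_ratio_limit
    (ρ : ℝ) (hρ : 0 < ρ) (r₀ : ℝ)
    (μ : Measure ℝ) [IsProbabilityMeasure μ]
    (hpos : ∀ r : ℝ, 0 < (μ (Set.Ioi r)).toReal)
    (hlt : ∀ r : ℝ, r₀ < r → (μ (Set.Ioi r)).toReal < 1)
    (F F' f : ℝ → ℝ)
    (hF : ∀ r : ℝ, F r = Real.log (Real.log (((μ (Set.Ioi r)).toReal)⁻¹)))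
    (hf : ∀ r : ℝ, f r =
      F' r * (μ (Set.Ioi r)).toReal * (-Real.log ((μ (Set.Ioi r)).toReal)))
    (hderiv : ∀ r : ℝ, r₀ < r → HasDerivAt F (F' r) r)
    (hcont : ContinuousOn F' (Set.Ioi r₀))
    (hlim : Filter.Tendsto F' Filter.atTop (nhds (1 / ρ))) :
    (∀ a b : ℝ, r₀ < a → a ≤ b →
        (μ (Set.Ioc a b)).toReal = ∫ r in a..b, f r) ∧
      ∀ K : Set ℝ, IsCompact K →
        TendstoUniformlyOn
          (fun (r : ℝ) (s : ℝ) => f (r + s * Real.exp (-F r)) / f r)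
          (fun s => Real.exp (-s / ρ)) Filter.atTop K := by
  have htail : ∀ r, r₀ < r → μ.real (Ioi r) = exp (-exp (F r)) := fun r hr => by
    rw [hF r]
    exact (exp_neg_exp_log_log_inv (hpos r) (hlt r hr)).symm
  have hfeq : ∀ r, r₀ < r → f r = F' r * exp (F r - exp (F r)) := fun r hr => by
    rw [hf r]
    change F' r * μ.real (Ioi r) * -log (μ.real (Ioi r)) = _
    rw [htail r hr, log_exp, neg_neg, sub_eq_add_neg, exp_add]
    ring
  refine ⟨fun a b ha hab => ?_, fun K hK => ?_⟩
  · refine (measureReal_Ioc_eq_integral_of_tail_eq htail hderiv hcont ha hab).trans ?_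
    exact intervalIntegral.integral_congr fun x hx =>
      (hfeq x (ha.trans_le (uIcc_of_le hab ▸ hx).1)).symm
  · simpa only [one_div, inv_mul_eq_div, neg_div] using
      tendstoUniformlyOn_density_ratio hderiv (one_div_pos.2 hρ) hlim
        ((eventually_gt_atTop r₀).mono hfeq) hK.isBounded
end

section
/- Fix ρ > 0, A > 0, a finite set C ⊂ Z^d, and define for φ: C → R the truncated functional L_{C,A}(φ) := Σ_{x∈C} e^{φ(x)/ρ} 1_{{φ(x) ≥ -2A}}. Suppose A ≥ χ_C and A(1 + A/(4d)) ≥ 4d, and set η(A) := 2d(1 + A/(4d))^{-1}. Then for all a ∈ R and all ξ: if λ_C^{(1)}(ξ) ≥ a then L_{C,A}(ξ - a - χ_C) ≥ e^{-η(A)/ρ}. -/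
open scoped BigOperators
open MeasureTheory

namespace RSO

/-- The truncated functional `L_{C,A}(φ) = Σ_{x∈C} e^{φ(x)/ρ} 1_{φ(x) ≥ -2A}`. -/
noncomputable def LCA {d : ℕ} (ρ A : ℝ) (C : Finset (Site d)) (φ : Site d → ℝ) : ℝ :=
  ∑ x ∈ C, if -(2 * A) ≤ φ x then Real.exp (φ x / ρ) else 0

/-!
The top eigenvalue `λ_D(ξ)` is the maximum of the quadratic form of `Δ + ξ` on the unit sphere
of `ℝ^D`. Let `ψ` be a top eigenfunction on `C` and `B = C \ C'`. On `B` the potential lies at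
least `A` below `λ_C`, so the eigenvalue equation gives `(A + 2d)|ψ| ≤ Σ_{neighbours} |ψ|` there.
Cauchy–Schwarz, with at most `2d` neighbours per site, then bounds both the mass of `ψ` on `B`
and the flux of `ψ` across the boundary of `C'` by its mass on `C'`; testing the quadratic form
of `C'` with `ψ` gives `λ_{C'} ≥ λ_C - 4d²(A + 2d)/(A(A + 4d)) ≥ a - η(A)`.

By the variational definition of `χ`, `λ_{C'}(ξ) ≥ a'` forces `L_{C'}(ξ - a' - χ_{C'}) ≥ 1`, and
`χ_{C'} ≥ χ_C` because `λ` is monotone in the domain and a potential on `C'` extends to `C` by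
very negative values, making `L_C` arbitrarily close to `L_{C'}`.
-/

section

open Finset Matrix

variable {d : ℕ}

def nbrs (E : Finset (Site d)) (x : Site d) : Finset (Site d) :=
  E.filter fun y => dist1 x y = 1

lemma hamApply_eq (D : Finset (Site d)) (ξ f : Site d → ℝ) (x : Site d) :
    hamApply D ξ f x = ∑ y ∈ nbrs D x, f y + (ξ x - 2 * d) * f x :=
  rfl

lemma eq_update_of_dist1_eq_one {x y : Site d} (h : dist1 x y = 1) :
    ∃ i, (x i - y i).natAbs = 1 ∧ y = Function.update x i (y i) := by
  obtain ⟨i, hi⟩ : ∃ i, x i ≠ y i := by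
    by_contra! hxy
    simp [dist1, hxy] at h
  have hsplit := add_sum_erase univ (fun j => (x j - y j).natAbs) (mem_univ i)
  rw [← dist1, h] at hsplit
  have hrest : ∑ j ∈ univ.erase i, (x j - y j).natAbs = 0 := by omega
  refine ⟨i, by omega, funext fun j => ?_⟩
  rcases eq_or_ne j i with rfl | hj
  · simp
  · have := sum_eq_zero_iff.mp hrest j (mem_erase.mpr ⟨hj, mem_univ j⟩)
    rw [Function.update_of_ne hj]
    omega

lemma card_nbrs_le (E : Finset (Site d)) (x : Site d) : #(nbrs E x) ≤ 2 * d := by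
  classical
  have hsub : nbrs E x ⊆ (univ : Finset (Fin d × Bool)).image
      fun p => Function.update x p.1 (if p.2 then x p.1 + 1 else x p.1 - 1) := by
    intro y hy
    obtain ⟨i, hi, hy⟩ := eq_update_of_dist1_eq_one (mem_filter.mp hy).2
    refine mem_image.mpr ⟨(i, decide (y i = x i + 1)), mem_univ _, ?_⟩
    conv_rhs => rw [hy]
    congr 1
    grind
  calc #(nbrs E x) ≤ #((univ : Finset (Fin d × Bool)).image _) := card_le_card hsub
    _ ≤ #(univ : Finset (Fin d × Bool)) := card_image_le
    _ = 2 * d := by simp [mul_comm]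

lemma sum_sum_nbrs_comm (B E : Finset (Site d)) (F : Site d → Site d → ℝ) :
    ∑ y ∈ B, ∑ u ∈ nbrs E y, F y u = ∑ u ∈ E, ∑ y ∈ nbrs B u, F y u := by
  simp only [nbrs, sum_filter]
  rw [sum_comm]
  simp only [dist1_comm]

lemma sum_sq_sum_nbrs_le (B D : Finset (Site d)) (g : Site d → ℝ) :
    ∑ y ∈ B, (∑ u ∈ nbrs D y, g u) ^ 2 ≤ 4 * d ^ 2 * ∑ u ∈ D, g u ^ 2 := by
  have hcard (E : Finset (Site d)) (x : Site d) : (#(nbrs E x) : ℝ) ≤ 2 * d := by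
    exact_mod_cast card_nbrs_le E x
  calc ∑ y ∈ B, (∑ u ∈ nbrs D y, g u) ^ 2
      ≤ ∑ y ∈ B, 2 * d * ∑ u ∈ nbrs D y, g u ^ 2 := by
        gcongr with y
        exact (sq_sum_le_card_mul_sum_sq ..).trans
          (mul_le_mul_of_nonneg_right (hcard D y) (sum_nonneg fun _ _ => sq_nonneg _))
    _ = 2 * d * ∑ u ∈ D, #(nbrs B u) * g u ^ 2 := by
        rw [← mul_sum, sum_sum_nbrs_comm B D fun _ u => g u ^ 2]
        simp only [sum_const, nsmul_eq_mul]
    _ ≤ 2 * d * ∑ u ∈ D, 2 * d * g u ^ 2 := by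
        gcongr with u
        exact hcard B u
    _ = 4 * d ^ 2 * ∑ u ∈ D, g u ^ 2 := by
        rw [mul_sum, mul_sum]
        exact sum_congr rfl fun _ _ => by ring

lemma isGreatest_getD_insertionSort {α : Type*} [LinearOrder α] {l : List α} (hl : l ≠ [])
    (x₀ : α) : IsGreatest {x | x ∈ l} ((l.insertionSort fun a b => b ≤ a).getD 0 x₀) := by
  obtain ⟨x, s, hxs⟩ : ∃ x s, l.insertionSort (fun a b => b ≤ a) = x :: s :=
    List.exists_cons_of_ne_nil <| by
      rwa [ne_eq, ← List.length_eq_zero_iff, List.length_insertionSort, List.length_eq_zero_iff]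
  have hsorted := List.pairwise_insertionSort (fun a b : α => b ≤ a) l
  rw [hxs] at hsorted ⊢
  have hmem {y : α} : y ∈ x :: s ↔ y ∈ l := hxs ▸ List.mem_insertionSort _
  refine ⟨hmem.mp List.mem_cons_self, fun y hy => ?_⟩
  rcases List.mem_cons.mp (hmem.mpr hy) with rfl | hy
  · exact le_rfl
  · exact List.rel_of_pairwise_cons hsorted hy

lemma lambdaK_one_isGreatest {D : Finset (Site d)} (hD : D.Nonempty) (ξ : Site d → ℝ) :
    IsGreatest (Set.range (matH_isHermitian D ξ).eigenvalues) (lambdaK D ξ 1) := by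
  have hrange : {x | x ∈ (D.attach.val.map (matH_isHermitian D ξ).eigenvalues).toList}
      = Set.range (matH_isHermitian D ξ).eigenvalues := by
    ext μ
    simp only [Set.mem_ofPred_eq, Multiset.mem_toList, Multiset.mem_map, Set.mem_range]
    exact ⟨fun ⟨i, _, hi⟩ => ⟨i, hi⟩, fun ⟨i, hi⟩ => ⟨i, Finset.mem_attach _ i, hi⟩⟩
  rw [← hrange]
  refine isGreatest_getD_insertionSort ?_ 0
  obtain ⟨x, hx⟩ := hD
  exact List.ne_nil_of_mem (Multiset.mem_toList.mpr
    (Multiset.mem_map_of_mem _ (Multiset.mem_attach _ ⟨x, hx⟩)))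

open scoped MatrixOrder in
lemma dotProduct_mulVec_le_of_eigenvalues_le {n : Type*} [Fintype n] [DecidableEq n]
    {H : Matrix n n ℝ} (hH : H.IsHermitian) {r : ℝ} (h : ∀ i, hH.eigenvalues i ≤ r)
    (w : n → ℝ) : w ⬝ᵥ (H *ᵥ w) ≤ r * (w ⬝ᵥ w) := by
  have hle : H ≤ algebraMap ℝ (Matrix n n ℝ) r := by
    refine le_algebraMap_of_spectrum_le ?_ hH.isSelfAdjoint
    rw [hH.spectrum_real_eq_range_eigenvalues]
    rintro _ ⟨i, rfl⟩
    exact h i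
  have := (Matrix.le_iff.mp hle).dotProduct_mulVec_nonneg w
  simpa [Matrix.sub_mulVec, Algebra.algebraMap_eq_smul_one, Matrix.smul_mulVec, dotProduct_sub,
    sub_nonneg] using this

noncomputable def hamForm (D : Finset (Site d)) (ξ f : Site d → ℝ) : ℝ :=
  ∑ x ∈ D, f x * hamApply D ξ f x

lemma mulVec_matH (D : Finset (Site d)) (ξ f : Site d → ℝ) (x : D) :
    (matH D ξ *ᵥ fun y : D => f y) x = hamApply D ξ f x := by
  classical
  simp only [mulVec, dotProduct, matH, add_mul, ite_mul, one_mul, zero_mul, sum_add_distrib,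
    sum_ite_eq, mem_univ, if_true, hamApply_eq, nbrs, sum_filter]
  exact congrArg (· + _) (sum_coe_sort D fun y => if dist1 (x : Site d) y = 1 then f y else 0)

variable {D : Finset (Site d)} {ξ f : Site d → ℝ} {μ : ℝ}

lemma hamForm_le (hD : D.Nonempty) (ξ f : Site d → ℝ) :
    hamForm D ξ f ≤ lambdaK D ξ 1 * ∑ x ∈ D, f x ^ 2 := by
  have h := dotProduct_mulVec_le_of_eigenvalues_le (matH_isHermitian D ξ)
    (fun i => (lambdaK_one_isGreatest hD ξ).2 ⟨i, rfl⟩) fun y : D => f y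
  simp only [dotProduct, mulVec_matH, ← sq] at h
  rwa [sum_coe_sort D fun x => f x * hamApply D ξ f x, sum_coe_sort D fun x => f x ^ 2] at h

lemma exists_isEigen (hD : D.Nonempty) (ξ : Site d → ℝ) :
    ∃ f, IsEigen D ξ (lambdaK D ξ 1) f := by
  classical
  obtain ⟨⟨i, hi⟩, -⟩ := lambdaK_one_isGreatest hD ξ
  set v : D → ℝ := ((matH_isHermitian D ξ).eigenvectorBasis i).ofLp
  refine ⟨fun x => if h : x ∈ D then v ⟨x, h⟩ else 0, fun x hx => dif_neg hx, ?_, fun x hx => ?_⟩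
  · obtain ⟨j, hj⟩ : ∃ j, v j ≠ 0 := by
      by_contra! h
      exact (matH_isHermitian D ξ).eigenvectorBasis.orthonormal.ne_zero i
        (by ext j; simpa using h j)
    exact fun h0 => hj (by simpa using congrFun h0 j)
  · have h := mulVec_matH D ξ (fun x => if h : x ∈ D then v ⟨x, h⟩ else 0) ⟨x, hx⟩
    rw [show (fun y : D => if h : (y : Site d) ∈ D then v ⟨y, h⟩ else 0) = v from
      funext fun y => dif_pos y.2] at h
    rw [← h, (matH_isHermitian D ξ).mulVec_eigenvectorBasis i, hi]
    simp [hx, v]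

lemma IsEigen.sum_sq_pos_s13 (hf : IsEigen D ξ μ f) : 0 < ∑ x ∈ D, f x ^ 2 := by
  obtain ⟨x, hx⟩ := Function.ne_iff.mp hf.2.1
  have hxD : x ∈ D := by_contra fun h => hx (hf.1 x h)
  exact sum_pos' (fun _ _ => sq_nonneg _) ⟨x, hxD, sq_pos_of_ne_zero (by simpa using hx)⟩

lemma IsEigen.hamForm_eq (hf : IsEigen D ξ μ f) : hamForm D ξ f = μ * ∑ x ∈ D, f x ^ 2 := by
  rw [hamForm, mul_sum]
  exact sum_congr rfl fun x hx => by rw [hf.2.2 x hx]; ring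

lemma le_lambdaK_of_le_hamForm (hf : 0 < ∑ x ∈ D, f x ^ 2)
    (h : μ * ∑ x ∈ D, f x ^ 2 ≤ hamForm D ξ f) : μ ≤ lambdaK D ξ 1 :=
  le_of_mul_le_mul_right (h.trans (hamForm_le (nonempty_of_sum_ne_zero hf.ne') ξ f)) hf

lemma lambdaK_le_add_of_hamForm_le {D' : Finset (Site d)} {ξ' : Site d → ℝ} {t : ℝ}
    (hsub : D ⊆ D') (hD : D.Nonempty)
    (h : ∀ f, (∀ x ∉ D, f x = 0) → hamForm D ξ f ≤ hamForm D' ξ' f + t * ∑ x ∈ D, f x ^ 2) :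
    lambdaK D ξ 1 ≤ lambdaK D' ξ' 1 + t := by
  obtain ⟨f, hf⟩ := exists_isEigen hD ξ
  have hnorm : ∑ x ∈ D', f x ^ 2 = ∑ x ∈ D, f x ^ 2 :=
    (sum_subset hsub fun x _ hx => by simp [hf.1 x hx]).symm
  have := le_lambdaK_of_le_hamForm (ξ := ξ') (μ := lambdaK D ξ 1 - t) (hnorm ▸ hf.sum_sq_pos_s13)
    (by rw [hnorm]; linarith [h f hf.1, hf.hamForm_eq])
  linarith

lemma lambdaK_sub_const (hD : D.Nonempty) (ξ : Site d → ℝ) (t : ℝ) :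
    lambdaK D (fun x => ξ x - t) 1 = lambdaK D ξ 1 - t := by
  have hform (f : Site d → ℝ) :
      hamForm D (fun x => ξ x - t) f = hamForm D ξ f - t * ∑ x ∈ D, f x ^ 2 := by
    simp only [hamForm, hamApply_eq, mul_sum, ← sum_sub_distrib]
    exact sum_congr rfl fun x _ => by ring
  have h1 := lambdaK_le_add_of_hamForm_le (ξ' := ξ) (t := -t) subset_rfl hD
    fun f _ => by rw [hform]; linarith
  have h2 := lambdaK_le_add_of_hamForm_le (ξ := ξ) (ξ' := fun x => ξ x - t) (t := t) subset_rfl hD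
    fun f _ => by rw [hform]; linarith
  linarith

lemma hamApply_of_subset {D' : Finset (Site d)} (hsub : D' ⊆ D) (ξ f : Site d → ℝ)
    (x : Site d) : hamApply D ξ f x = hamApply D' ξ f x + ∑ y ∈ nbrs (D \ D') x, f y := by
  simp only [hamApply_eq, nbrs, sum_filter]
  rw [← sum_sdiff hsub]
  ring

lemma hamForm_of_subset {D' : Finset (Site d)} {ξ' : Site d → ℝ} (hsub : D' ⊆ D)
    (hξ : ∀ x ∈ D', ξ' x = ξ x) (hf : ∀ x ∉ D', f x = 0) : hamForm D ξ f = hamForm D' ξ' f := by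
  rw [hamForm, ← sum_subset hsub fun x _ hx => by simp [hf x hx]]
  refine sum_congr rfl fun x hx => ?_
  have hout : ∑ y ∈ nbrs (D \ D') x, f y = 0 :=
    sum_eq_zero fun y hy => hf y (mem_sdiff.mp (mem_filter.mp hy).1).2
  rw [hamApply_of_subset hsub, hout, add_zero]
  simp only [hamApply_eq, hξ x hx]

lemma lambdaK_le_of_subset {D' : Finset (Site d)} {ξ' : Site d → ℝ} (hsub : D' ⊆ D)
    (hD' : D'.Nonempty) (hξ : ∀ x ∈ D', ξ' x = ξ x) : lambdaK D' ξ' 1 ≤ lambdaK D ξ 1 := by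
  simpa using lambdaK_le_add_of_hamForm_le (t := 0) hsub hD' fun f hf => by
    rw [hamForm_of_subset hsub hξ hf]; simp

lemma sum_nbrs_eq_of_hamApply_eq {x : Site d} (h : hamApply D ξ f x = μ * f x) :
    ∑ y ∈ nbrs D x, f y = (μ - ξ x + 2 * d) * f x := by
  rw [hamApply_eq] at h
  linarith

lemma exists_lambdaK_le (hD : D.Nonempty) (ξ : Site d → ℝ) : ∃ z ∈ D, lambdaK D ξ 1 ≤ ξ z := by
  obtain ⟨f, hf⟩ := exists_isEigen hD ξ
  obtain ⟨z, hz, hmax⟩ := D.exists_max_image (fun x => |f x|) hD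
  have hfz : 0 < |f z| := by
    obtain ⟨x, hx, hfx⟩ := exists_ne_zero_of_sum_ne_zero hf.sum_sq_pos_s13.ne'
    exact (abs_pos.mpr fun h => hfx (by simp [h])).trans_le (hmax x hx)
  refine ⟨z, hz, ?_⟩
  suffices (lambdaK D ξ 1 - ξ z + 2 * d) * |f z| ≤ 2 * d * |f z| by
    linarith [le_of_mul_le_mul_right this hfz]
  calc (lambdaK D ξ 1 - ξ z + 2 * d) * |f z|
      ≤ |(lambdaK D ξ 1 - ξ z + 2 * d) * f z| := by
        rw [abs_mul]; exact mul_le_mul_of_nonneg_right (le_abs_self _) (abs_nonneg _)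
    _ = |∑ y ∈ nbrs D z, f y| := by rw [sum_nbrs_eq_of_hamApply_eq (hf.2.2 z hz)]
    _ ≤ ∑ y ∈ nbrs D z, |f y| := abs_sum_le_sum_abs _ _
    _ ≤ #(nbrs D z) • |f z| := sum_le_card_nsmul _ _ _ fun y hy => hmax y (mem_filter.mp hy).1
    _ ≤ 2 * d * |f z| := by
        rw [nsmul_eq_mul]
        gcongr
        exact_mod_cast card_nbrs_le D z

noncomputable def boundaryFlux (D D' : Finset (Site d)) (f : Site d → ℝ) : ℝ :=
  ∑ y ∈ D \ D', |f y| * ∑ u ∈ nbrs D y, |f u|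

lemma mul_sum_sq_le_boundaryFlux {D' : Finset (Site d)} {A : ℝ}
    (hf : ∀ x ∈ D, hamApply D ξ f x = μ * f x) (hout : ∀ y ∈ D \ D', ξ y ≤ μ - A) :
    (A + 2 * d) * ∑ y ∈ D \ D', f y ^ 2 ≤ boundaryFlux D D' f := by
  rw [boundaryFlux, mul_sum]
  refine sum_le_sum fun y hy => ?_
  have hc : A + 2 * d ≤ μ - ξ y + 2 * d := by linarith [hout y hy]
  calc (A + 2 * d) * f y ^ 2 = |f y| * ((A + 2 * d) * |f y|) := by rw [← sq_abs]; ring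
    _ ≤ |f y| * |(μ - ξ y + 2 * d) * f y| := by
        gcongr
        rw [abs_mul]
        exact mul_le_mul_of_nonneg_right (hc.trans (le_abs_self _)) (abs_nonneg _)
    _ = |f y| * |∑ u ∈ nbrs D y, f u| := by
        rw [sum_nbrs_eq_of_hamApply_eq (hf y (mem_sdiff.mp hy).1)]
    _ ≤ |f y| * ∑ u ∈ nbrs D y, |f u| := by gcongr; exact abs_sum_le_sum_abs _ _

lemma boundaryFlux_sq_le (D D' : Finset (Site d)) (f : Site d → ℝ) :
    boundaryFlux D D' f ^ 2 ≤ 4 * d ^ 2 * (∑ y ∈ D \ D', f y ^ 2) * ∑ x ∈ D, f x ^ 2 := by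
  calc boundaryFlux D D' f ^ 2
      ≤ (∑ y ∈ D \ D', |f y| ^ 2) * ∑ y ∈ D \ D', (∑ u ∈ nbrs D y, |f u|) ^ 2 :=
        sum_mul_sq_le_sq_mul_sq _ _ _
    _ ≤ (∑ y ∈ D \ D', f y ^ 2) * (4 * d ^ 2 * ∑ x ∈ D, f x ^ 2) := by
        simp only [sq_abs]
        gcongr
        simpa only [sq_abs] using sum_sq_sum_nbrs_le (D \ D') D fun u => |f u|
    _ = _ := by ring

lemma sum_mul_sum_nbrs_le_boundaryFlux {D' : Finset (Site d)} (hsub : D' ⊆ D)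
    (f : Site d → ℝ) :
    ∑ x ∈ D', f x * ∑ y ∈ nbrs (D \ D') x, f y ≤ boundaryFlux D D' f := by
  calc ∑ x ∈ D', f x * ∑ y ∈ nbrs (D \ D') x, f y
      ≤ ∑ x ∈ D', ∑ y ∈ nbrs (D \ D') x, |f y| * |f x| := by
        gcongr with x
        rw [mul_sum]
        exact sum_le_sum fun y _ => by rw [mul_comm, ← abs_mul]; exact le_abs_self _
    _ = ∑ y ∈ D \ D', |f y| * ∑ x ∈ nbrs D' y, |f x| := by
        rw [← sum_sum_nbrs_comm]
        simp only [mul_sum]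
    _ ≤ boundaryFlux D D' f := by
        refine sum_le_sum fun y _ => ?_
        gcongr
        exact filter_subset_filter _ hsub

lemma hamForm_ge_of_hamApply_eq {D' : Finset (Site d)} (hsub : D' ⊆ D)
    (hf : ∀ x ∈ D, hamApply D ξ f x = μ * f x) :
    μ * ∑ x ∈ D', f x ^ 2 - boundaryFlux D D' f ≤ hamForm D' ξ f := by
  have h : hamForm D' ξ f = μ * ∑ x ∈ D', f x ^ 2 - ∑ x ∈ D', f x * ∑ y ∈ nbrs (D \ D') x, f y := by
    rw [hamForm, mul_sum, ← sum_sub_distrib]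
    refine sum_congr rfl fun x hx => ?_
    rw [eq_sub_of_add_eq (hamApply_of_subset hsub ξ f x).symm, hf x (hsub hx)]
    ring
  linarith [sum_mul_sum_nbrs_le_boundaryFlux hsub f]

lemma mul_le_of_sq_le_mul_add {α k n m t : ℝ} (hk : 0 ≤ k) (hα : 0 ≤ α) (hkα : k < α ^ 2)
    (hn : 0 ≤ n) (hm : 0 ≤ m) (ht : α * n ≤ t) (ht2 : t ^ 2 ≤ k * n * (n + m)) :
    n * (α ^ 2 - k) ≤ k * m ∧ t * (α ^ 2 - k) ≤ k * α * m := by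
  have hn' : n * (α ^ 2 - k) ≤ k * m := by
    rcases hn.eq_or_lt with rfl | hn
    · simpa using mul_nonneg hk hm
    · have : (α * n) ^ 2 ≤ k * n * (n + m) := (pow_le_pow_left₀ (by positivity) ht 2).trans ht2
      nlinarith
  refine ⟨hn', ?_⟩
  -- Substitute `n ≤ k m / (α² - k)` into `t² ≤ k n (n + m)`.
  have hg : 0 ≤ α ^ 2 - k := by linarith
  have ht0 : 0 ≤ t := (mul_nonneg hα hn).trans ht
  have hsq : (t * (α ^ 2 - k)) ^ 2 ≤ (k * α * m) ^ 2 :=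
    calc (t * (α ^ 2 - k)) ^ 2 ≤ k * (n * (α ^ 2 - k)) * (n * (α ^ 2 - k) + m * (α ^ 2 - k)) := by
          nlinarith [mul_le_mul_of_nonneg_right ht2 (sq_nonneg (α ^ 2 - k))]
      _ ≤ k * (k * m) * (k * m + m * (α ^ 2 - k)) := by gcongr
      _ = (k * α * m) ^ 2 := by ring
  exact (pow_le_pow_iff_left₀ (by positivity) (by positivity) two_ne_zero).mp hsq

theorem nonempty_and_lambdaK_sub_le_of_subset {D' : Finset (Site d)} {A : ℝ} (hsub : D' ⊆ D)
    (hD : D.Nonempty) (hA : 0 < A) (hout : ∀ y ∈ D \ D', ξ y ≤ lambdaK D ξ 1 - A) :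
    D'.Nonempty ∧ lambdaK D ξ 1 - 4 * d ^ 2 * (A + 2 * d) / (A * (A + 4 * d)) ≤ lambdaK D' ξ 1 := by
  obtain ⟨f, hf⟩ := exists_isEigen hD ξ
  set n := ∑ y ∈ D \ D', f y ^ 2
  set m := ∑ x ∈ D', f x ^ 2
  have hnm : n + m = ∑ x ∈ D, f x ^ 2 := sum_sdiff hsub
  have hflux := boundaryFlux_sq_le D D' f
  rw [← hnm] at hflux
  have hg : (A + 2 * d) ^ 2 - 4 * d ^ 2 = A * (A + 4 * d) := by ring
  obtain ⟨hn, hT⟩ := mul_le_of_sq_le_mul_add (by positivity) (by positivity) (by nlinarith)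
    (sum_nonneg fun _ _ => sq_nonneg _) (sum_nonneg fun _ _ => sq_nonneg _)
    (mul_sum_sq_le_boundaryFlux hf.2.2 hout) hflux
  rw [hg] at hn hT
  have hm : 0 < m := by
    by_contra! hm
    have : n * (A * (A + 4 * d)) ≤ 0 := hn.trans (by nlinarith)
    have : n ≤ 0 := nonpos_of_mul_nonpos_left this (by positivity)
    linarith [hf.sum_sq_pos_s13]
  refine ⟨nonempty_of_sum_ne_zero hm.ne', le_lambdaK_of_le_hamForm hm ?_⟩
  have hTm : boundaryFlux D D' f ≤ 4 * d ^ 2 * (A + 2 * d) / (A * (A + 4 * d)) * m := by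
    rw [div_mul_eq_mul_div, le_div_iff₀ (by positivity)]
    linarith
  linarith [hamForm_ge_of_hamApply_eq hsub hf.2.2]

variable {ρ : ℝ}

lemma LC_mono (hρ : 0 ≤ ρ) {φ ψ : Site d → ℝ} (h : ∀ x ∈ D, φ x ≤ ψ x) :
    LC ρ D φ ≤ LC ρ D ψ :=
  sum_le_sum fun x hx => Real.exp_le_exp.mpr (div_le_div_of_nonneg_right (h x hx) hρ)

lemma LC_sub_const (φ : Site d → ℝ) (t : ℝ) :
    LC ρ D (fun x => φ x - t) = Real.exp (-t / ρ) * LC ρ D φ := by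
  rw [LC, LC, mul_sum]
  exact sum_congr rfl fun x _ => by rw [← Real.exp_add]; ring_nf

lemma LC_sub_log (hρ : ρ ≠ 0) (hD : D.Nonempty) (φ : Site d → ℝ) :
    LC ρ D (fun x => φ x - ρ * Real.log (LC ρ D φ)) = 1 := by
  have hpos : 0 < LC ρ D φ := sum_pos (fun _ _ => Real.exp_pos _) hD
  rw [LC_sub_const, neg_div, mul_div_cancel_left₀ _ hρ, Real.exp_neg, Real.exp_log hpos,
    inv_mul_cancel₀ hpos.ne']

lemma lambdaK_nonpos_of_LC_le_one (hρ : 0 < ρ) (hD : D.Nonempty) {φ : Site d → ℝ}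
    (hφ : LC ρ D φ ≤ 1) : lambdaK D φ 1 ≤ 0 := by
  obtain ⟨z, hz, hle⟩ := exists_lambdaK_le hD φ
  have : Real.exp (φ z / ρ) ≤ 1 :=
    (single_le_sum (fun x _ => (Real.exp_pos (φ x / ρ)).le) hz).trans hφ
  have : φ z ≤ 0 := by simpa using (div_le_iff₀ hρ).mp (Real.exp_le_one_iff.mp this)
  linarith

lemma lambdaK_le_neg_chi (hρ : 0 < ρ) (hD : D.Nonempty) {φ : Site d → ℝ} (hφ : LC ρ D φ ≤ 1) :
    lambdaK D φ 1 ≤ -chi ρ D := by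
  rw [chi, neg_neg]
  refine le_csSup ⟨0, ?_⟩ ⟨φ, hφ, rfl⟩
  rintro _ ⟨ψ, hψ, rfl⟩
  exact lambdaK_nonpos_of_LC_le_one hρ hD hψ

lemma neg_chi_le (hρ : 0 < ρ) (hD : D.Nonempty) {s : ℝ}
    (h : ∀ φ, LC ρ D φ ≤ 1 → lambdaK D φ 1 ≤ s) : -chi ρ D ≤ s := by
  rw [chi, neg_neg]
  refine csSup_le ⟨_, _, (LC_sub_log hρ.ne' hD 0).le, rfl⟩ ?_
  rintro _ ⟨φ, hφ, rfl⟩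
  exact h φ hφ

lemma chi_nonneg (hρ : 0 < ρ) (hD : D.Nonempty) : 0 ≤ chi ρ D :=
  neg_nonpos.mp (neg_chi_le hρ hD fun _ => lambdaK_nonpos_of_LC_le_one hρ hD)

lemma one_le_LC_of_le_lambdaK (hρ : 0 < ρ) (hD : D.Nonempty) {b : ℝ} (hb : b ≤ lambdaK D ξ 1) :
    1 ≤ LC ρ D (fun x => ξ x - b - chi ρ D) := by
  have hnorm := LC_sub_log hρ.ne' hD ξ
  have hle := lambdaK_le_neg_chi hρ hD hnorm.le
  rw [lambdaK_sub_const hD] at hle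
  exact hnorm.symm.le.trans (LC_mono hρ.le fun x _ => by linarith)

lemma exists_extension_LC_le_one (hρ : 0 < ρ) {D' : Finset (Site d)} (hsub : D' ⊆ D)
    {φ : Site d → ℝ} (hφ : LC ρ D' φ ≤ 1) {δ : ℝ} (hδ : 0 < δ) :
    ∃ ψ : Site d → ℝ, LC ρ D ψ ≤ 1 ∧ ∀ x ∈ D', ψ x = φ x - δ := by
  classical
  set ε := (1 - Real.exp (-δ / ρ)) / (#D + 1)
  have hε : 0 < ε := div_pos (sub_pos.mpr (Real.exp_lt_one_iff.mpr
    (div_neg_of_neg_of_pos (neg_neg_of_pos hδ) hρ))) (by positivity)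
  -- Off `D'` each site carries weight `ε`, so together at most `1 - exp (-δ / ρ)`.
  refine ⟨fun x => if x ∈ D' then φ x - δ else ρ * Real.log ε, ?_, fun x hx => if_pos hx⟩
  have hin : ∑ x ∈ D', Real.exp ((if x ∈ D' then φ x - δ else ρ * Real.log ε) / ρ)
      ≤ Real.exp (-δ / ρ) := by
    rw [sum_congr rfl fun x hx => by rw [if_pos hx], ← LC, LC_sub_const]
    exact mul_le_of_le_one_right (Real.exp_pos _).le hφ
  have hout : ∑ x ∈ D \ D', Real.exp ((if x ∈ D' then φ x - δ else ρ * Real.log ε) / ρ)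
      ≤ (#D + 1) * ε := by
    rw [sum_congr rfl fun x hx => by
      rw [if_neg (mem_sdiff.mp hx).2, mul_div_cancel_left₀ _ hρ.ne', Real.exp_log hε]]
    rw [sum_const, nsmul_eq_mul]
    gcongr
    exact_mod_cast (card_le_card sdiff_subset).trans (Nat.le_succ _)
  rw [LC, ← sum_sdiff hsub]
  have : (#D + 1) * ε = 1 - Real.exp (-δ / ρ) := mul_div_cancel₀ _ (by positivity)
  linarith

lemma chi_le_chi_of_subset_s13 (hρ : 0 < ρ) {D' : Finset (Site d)} (hsub : D' ⊆ D)
    (hD' : D'.Nonempty) : chi ρ D ≤ chi ρ D' := by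
  refine neg_le_neg_iff.mp (neg_chi_le hρ hD' fun φ hφ => le_of_forall_pos_le_add fun δ hδ => ?_)
  obtain ⟨ψ, hψ, hψφ⟩ := exists_extension_LC_le_one hρ hsub hφ hδ
  have := lambdaK_le_of_subset (ξ' := fun x => φ x - δ) hsub hD' fun x hx => (hψφ x hx).symm
  rw [lambdaK_sub_const hD'] at this
  linarith [lambdaK_le_neg_chi hρ (hD'.mono hsub) hψ]

lemma LCA_eq_LC_filter (ρ A : ℝ) (C : Finset (Site d)) (φ : Site d → ℝ) :
    LCA ρ A C φ = LC ρ (C.filter fun x => -(2 * A) ≤ φ x) φ :=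
  (sum_filter _ _).symm

lemma two_mul_le_of_le_mul_one_add_div {e A : ℝ} (he : 0 < e) (hA0 : 0 ≤ A)
    (hA : 4 * e ≤ A * (1 + A / (4 * e))) : 2 * e ≤ A := by
  by_contra! hlt
  have : A / (4 * e) < 1 / 2 := by rw [div_lt_iff₀ (by positivity)]; linarith
  nlinarith

lemma truncation_const_le {e A : ℝ} (he : 0 < e) (hA : 2 * e ≤ A) :
    4 * e ^ 2 * (A + 2 * e) / (A * (A + 4 * e)) ≤ 2 * e * (1 + A / (4 * e))⁻¹ := by
  have hA0 : 0 < A := by linarith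
  have hη : 2 * e * (1 + A / (4 * e))⁻¹ = 8 * e ^ 2 / (A + 4 * e) := by
    field_simp
    ring
  rw [hη, div_le_div_iff₀ (by positivity) (by positivity)]
  nlinarith [mul_pos he he, mul_nonneg (mul_pos he he).le (sub_nonneg.mpr hA)]

end

/-- Lemma 4.6: for `A ≥ χ_C` with `A(1+A/(4d)) ≥ 4d` and
`η(A) := 2d(1+A/(4d))⁻¹`: if `λ_C^{(1)}(ξ) ≥ a` then `L_{C,A}(ξ-a-χ_C) ≥ e^{-η(A)/ρ}`. -/
theorem truncated_LD_bound {d : ℕ} (hd : 0 < d) (ρ : ℝ) (hρ : 0 < ρ)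
    (C : Finset (Site d)) (hC : C.Nonempty) (A : ℝ)
    (hAchi : chi ρ C ≤ A) (hA : 4 * d ≤ A * (1 + A / (4 * d)))
    (a : ℝ) (ξ : Site d → ℝ) (hlam : a ≤ lambdaK C ξ 1) :
    Real.exp (-(2 * d * (1 + A / (4 * d))⁻¹) / ρ) ≤
      LCA ρ A C (fun x => ξ x - a - chi ρ C) := by
  have hd' : (0 : ℝ) < d := Nat.cast_pos.mpr hd
  have h2d := two_mul_le_of_le_mul_one_add_div hd' ((chi_nonneg hρ hC).trans hAchi) hA
  set η := 2 * d * (1 + A / (4 * d))⁻¹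
  set C' := C.filter fun x => -(2 * A) ≤ ξ x - a - chi ρ C
  have hsub : C' ⊆ C := Finset.filter_subset _ _
  obtain ⟨hC', htrunc⟩ := nonempty_and_lambdaK_sub_le_of_subset (A := A) hsub hC (by linarith)
    fun y hy => by
      simp only [C', Finset.mem_sdiff, Finset.mem_filter, not_and, not_le] at hy
      linarith [hy.2 hy.1]
  have hincl := one_le_LC_of_le_lambdaK (b := a - η) hρ hC'
    (by linarith [truncation_const_le hd' h2d])
  have hchi := chi_le_chi_of_subset_s13 hρ hsub hC'
  rw [LCA_eq_LC_filter]
  calc Real.exp (-η / ρ)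
      ≤ Real.exp (-η / ρ) * LC ρ C' (fun x => ξ x - (a - η) - chi ρ C') :=
        le_mul_of_one_le_right (Real.exp_pos _).le hincl
    _ ≤ Real.exp (-η / ρ) * LC ρ C' (fun x => ξ x - a - chi ρ C + η) := by
        gcongr
        exact LC_mono hρ.le fun x _ => by linarith
    _ = LC ρ C' (fun x => ξ x - a - chi ρ C) := by rw [← LC_sub_const]; simp

end RSO
end
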